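/- arXiv:1207.4347 — 5 statements merged into one kernel-verified Lean document; each statement's English description precedes it below -/
import Mathlib

section
/- For every r > 0, the limit as ε → 0⁺ of δ_{B̄(0,r)}(ε)/ε² exists and equals 1/(8r); moreover δ_{B̄(0,r)}(ε)/ε² > 1/(8r) for every ε ∈ (0, 2r]. -/
open Metric Set Filter
open scoped InnerProductSpace ENNReal Topology

variable {X : Type*} [NormedAddCommGroup X] [InnerProductSpace ℝ X] [CompleteSpace X]

/-- The "lens" of `x` and `y`: the intersection of all closed balls of radius `r`
containing both `x` and `y` (equal to the whole space if no such ball exists). -/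
def lens (r : ℝ) (x y : X) : Set X :=
  ⋂ c ∈ {c : X | x ∈ closedBall c r ∧ y ∈ closedBall c r}, closedBall c r

/-- A set `Ω` is `r`-convex if for all `x, y ∈ Ω` the lens of `x` and `y` is contained in `Ω`. -/
def IsRConvex (r : ℝ) (Ω : Set X) : Prop :=
  ∀ x ∈ Ω, ∀ y ∈ Ω, lens r x y ⊆ Ω

/-- The modulus of convexity `δ_Ω(ε)`, valued in `ℝ≥0∞` (with `+∞` when the
set of admissible `δ ≥ 0` is unbounded, e.g. when the condition is vacuous). -/
noncomputable def modConv (Ω : Set X) (ε : ℝ) : ℝ≥0∞ :=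
  sSup (ENNReal.ofReal '' {δ : ℝ | 0 ≤ δ ∧ ∀ x ∈ Ω, ∀ y ∈ Ω, ‖x - y‖ = ε →
    closedBall (midpoint ℝ x y) δ ⊆ Ω})

lemma exists_orthonormal_pair (hdim : 2 ≤ Module.rank ℝ X) :
    ∃ u v : X, ‖u‖ = 1 ∧ ‖v‖ = 1 ∧ ⟪u, v⟫_ℝ = 0 := by
  haveI : Nontrivial X := by
    rw [← rank_pos_iff_nontrivial (R := ℝ)]
    exact lt_of_lt_of_le (by norm_num) hdim
  obtain ⟨u0, hu0⟩ := exists_ne (0 : X)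
  have hK : ((ℝ ∙ u0)ᗮ : Submodule ℝ X) ≠ ⊥ := by
    intro h
    have htop : (ℝ ∙ u0) = (⊤ : Submodule ℝ X) := Submodule.orthogonal_eq_bot_iff.mp h
    have h1 : Module.rank ℝ X ≤ 1 := by
      have := rank_span_le (R := ℝ) ({u0} : Set X)
      simp only [Cardinal.mk_singleton] at this
      calc Module.rank ℝ X = Module.rank ℝ (⊤ : Submodule ℝ X) := (rank_top ℝ X).symm
        _ = Module.rank ℝ (ℝ ∙ u0) := by rw [htop]
        _ ≤ 1 := this
    have : (2 : Cardinal) ≤ 1 := hdim.trans h1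
    norm_num at this
  obtain ⟨v0, hv0mem, hv0⟩ := Submodule.ne_bot_iff _ |>.mp hK
  have hinner : ⟪u0, v0⟫_ℝ = 0 :=
    hv0mem u0 (Submodule.mem_span_singleton_self u0)
  refine ⟨‖u0‖⁻¹ • u0, ‖v0‖⁻¹ • v0, norm_smul_inv_norm hu0, norm_smul_inv_norm hv0, ?_⟩
  rw [real_inner_smul_left, real_inner_smul_right, hinner]
  ring

lemma modConv_closedBall_eq (hdim : 2 ≤ Module.rank ℝ X) {r ε : ℝ} (hr : 0 < r)
    (hε : 0 < ε) (hεr : ε ≤ 2 * r) :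
    modConv (closedBall (0 : X) r) ε = ENNReal.ofReal (r - Real.sqrt (r ^ 2 - ε ^ 2 / 4)) := by
  set s := Real.sqrt (r ^ 2 - ε ^ 2 / 4) with hs
  have hnn : 0 ≤ r ^ 2 - ε ^ 2 / 4 := by nlinarith
  have hs0 : 0 ≤ s := Real.sqrt_nonneg _
  have hs2 : s ^ 2 = r ^ 2 - ε ^ 2 / 4 := Real.sq_sqrt hnn
  have hsr : s ≤ r := by nlinarith
  rw [modConv]
  apply IsGreatest.csSup_eq
  constructor
  · -- membership : r - s is admissible
    refine ⟨r - s, ⟨by linarith, ?_⟩, rfl⟩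
    intro x hx y hy hxy z hz
    simp only [mem_closedBall, dist_zero_right] at hx hy ⊢
    have hm : ‖midpoint ℝ x y‖ ≤ s := by
      have hpar := parallelogram_law_with_norm ℝ x y
      have hmid : midpoint ℝ x y = (2 : ℝ)⁻¹ • (x + y) := by
        rw [midpoint_eq_smul_add]; norm_num
      have h1 : ‖midpoint ℝ x y‖ = 2⁻¹ * ‖x + y‖ := by
        rw [hmid, norm_smul]; norm_num
      have h2 : ‖midpoint ℝ x y‖ ^ 2 ≤ s ^ 2 := by
        rw [h1, hs2]
        nlinarith [norm_nonneg (x + y), norm_nonneg x, norm_nonneg y]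
      nlinarith [norm_nonneg (midpoint ℝ x y)]
    have := dist_triangle z (midpoint ℝ x y) 0
    simp only [mem_closedBall] at hz
    simp only [dist_zero_right] at this
    calc ‖z‖ ≤ dist z (midpoint ℝ x y) + ‖midpoint ℝ x y‖ := this
      _ ≤ (r - s) + s := add_le_add hz hm
      _ = r := by ring
  · -- upper bound
    rintro a ⟨δ, ⟨hδ0, hδ⟩, rfl⟩
    apply ENNReal.ofReal_le_ofReal
    obtain ⟨u, v, hu, hv, huv⟩ := exists_orthonormal_pair hdim
    set x : X := s • v + (ε / 2) • u with hxdef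
    set y : X := s • v - (ε / 2) • u with hydef
    have hvu : ⟪v, u⟫_ℝ = 0 := by rw [real_inner_comm]; exact huv
    have hinx : ⟪s • v, (ε / 2) • u⟫_ℝ = 0 := by
      rw [real_inner_smul_left, real_inner_smul_right, hvu]; ring
    have hnx : ‖x‖ = r := by
      have : ‖x‖ ^ 2 = r ^ 2 := by
        rw [hxdef, norm_add_sq_real, hinx, norm_smul, norm_smul, hu, hv]
        simp only [Real.norm_eq_abs, abs_of_nonneg hs0, abs_of_nonneg (by linarith : (0:ℝ) ≤ ε/2)]
        nlinarith
      have h2 := congrArg Real.sqrt this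
      rwa [Real.sqrt_sq (norm_nonneg x), Real.sqrt_sq hr.le] at h2
    have hny : ‖y‖ = r := by
      have : ‖y‖ ^ 2 = r ^ 2 := by
        rw [hydef, norm_sub_sq_real, hinx, norm_smul, norm_smul, hu, hv]
        simp only [Real.norm_eq_abs, abs_of_nonneg hs0, abs_of_nonneg (by linarith : (0:ℝ) ≤ ε/2)]
        nlinarith
      have h2 := congrArg Real.sqrt this
      rwa [Real.sqrt_sq (norm_nonneg y), Real.sqrt_sq hr.le] at h2
    have hxy : ‖x - y‖ = ε := by
      have : x - y = ε • u := by
        rw [hxdef, hydef]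
        rw [show ε = ε/2 + ε/2 by ring]
        module
      rw [this, norm_smul, hu, Real.norm_eq_abs, abs_of_pos hε, mul_one]
    have hmid : midpoint ℝ x y = s • v := by
      rw [midpoint_eq_smul_add, hxdef, hydef]
      rw [invOf_eq_inv]
      module
    have hsub := hδ x (by simp [hnx]) y (by simp [hny]) hxy
    have hp : (s + δ) • v ∈ closedBall (midpoint ℝ x y) δ := by
      rw [hmid, mem_closedBall, dist_eq_norm]
      rw [show (s + δ) • v - s • v = δ • v by module]
      rw [norm_smul, hv, Real.norm_eq_abs, abs_of_nonneg hδ0, mul_one]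
    have := hsub hp
    simp only [mem_closedBall, dist_zero_right] at this
    rw [norm_smul, hv, Real.norm_eq_abs, mul_one, abs_of_nonneg (by linarith : (0:ℝ) ≤ s + δ)] at this
    linarith

lemma quot_real_eq {r ε : ℝ} (hr : 0 < r) (hε : 0 < ε) (hεr : ε ≤ 2 * r) :
    (r - Real.sqrt (r ^ 2 - ε ^ 2 / 4)) / ε ^ 2
      = 1 / (4 * (r + Real.sqrt (r ^ 2 - ε ^ 2 / 4))) := by
  set s := Real.sqrt (r ^ 2 - ε ^ 2 / 4) with hs
  have hnn : 0 ≤ r ^ 2 - ε ^ 2 / 4 := by nlinarith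
  have hs0 : 0 ≤ s := Real.sqrt_nonneg _
  have hs2 : s ^ 2 = r ^ 2 - ε ^ 2 / 4 := Real.sq_sqrt hnn
  have hrs : 0 < r + s := by linarith
  field_simp
  nlinarith

/-- `lim_{ε→0⁺} δ_{B̄(0,r)}(ε)/ε² = 1/(8r)`, and moreover
`δ_{B̄(0,r)}(ε)/ε² > 1/(8r)` for every `ε ∈ (0, 2r]`. -/
theorem modConv_closedBall_div_sq (hdim : 2 ≤ Module.rank ℝ X) {r : ℝ} (hr : 0 < r) :
    Tendsto (fun ε : ℝ => modConv (closedBall (0 : X) r) ε / ENNReal.ofReal (ε ^ 2))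
      (𝓝[>] 0) (𝓝 (ENNReal.ofReal (1 / (8 * r)))) ∧
    ∀ ε ∈ Ioc 0 (2 * r),
      ENNReal.ofReal (1 / (8 * r)) <
        modConv (closedBall (0 : X) r) ε / ENNReal.ofReal (ε ^ 2) := by
  have key : ∀ ε ∈ Ioc (0:ℝ) (2 * r),
      modConv (closedBall (0 : X) r) ε / ENNReal.ofReal (ε ^ 2)
        = ENNReal.ofReal (1 / (4 * (r + Real.sqrt (r ^ 2 - ε ^ 2 / 4)))) := by
    intro ε hε
    rw [modConv_closedBall_eq hdim hr hε.1 hε.2,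
      ← ENNReal.ofReal_div_of_pos (pow_pos hε.1 2), quot_real_eq hr hε.1 hε.2]
  constructor
  · -- the limit
    have hlim : Tendsto (fun ε : ℝ => 1 / (4 * (r + Real.sqrt (r ^ 2 - ε ^ 2 / 4))))
        (𝓝 0) (𝓝 (1 / (8 * r))) := by
      have hcont : ContinuousAt (fun ε : ℝ => 1 / (4 * (r + Real.sqrt (r ^ 2 - ε ^ 2 / 4)))) 0 := by
        apply ContinuousAt.div continuousAt_const
        · exact (continuous_const.mul (continuous_const.add
            (Real.continuous_sqrt.comp (by continuity)))).continuousAt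
        · have : Real.sqrt (r ^ 2 - (0:ℝ) ^ 2 / 4) = r := by
            rw [show r ^ 2 - (0:ℝ) ^ 2 / 4 = r ^ 2 by ring, Real.sqrt_sq hr.le]
          simp only [this]
          positivity
      have h0 : (1 : ℝ) / (8 * r) = 1 / (4 * (r + Real.sqrt (r ^ 2 - (0:ℝ) ^ 2 / 4))) := by
        rw [show r ^ 2 - (0:ℝ) ^ 2 / 4 = r ^ 2 by ring, Real.sqrt_sq hr.le]
        ring
      rw [h0]
      exact hcont.tendsto
    have hg : Tendsto (fun ε : ℝ => ENNReal.ofReal (1 / (4 * (r + Real.sqrt (r ^ 2 - ε ^ 2 / 4)))))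
        (𝓝[>] 0) (𝓝 (ENNReal.ofReal (1 / (8 * r)))) :=
      (ENNReal.continuous_ofReal.tendsto _).comp (hlim.mono_left nhdsWithin_le_nhds)
    apply hg.congr'
    filter_upwards [Ioc_mem_nhdsGT_of_mem (by constructor <;> [rfl; positivity] : (0:ℝ) ∈ Ico 0 (2*r))] with ε hε
    exact (key ε hε).symm
  · intro ε hε
    rw [key ε hε]
    set s := Real.sqrt (r ^ 2 - ε ^ 2 / 4) with hs
    have hnn : 0 ≤ r ^ 2 - ε ^ 2 / 4 := by nlinarith [hε.1, hε.2]
    have hs0 : 0 ≤ s := Real.sqrt_nonneg _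
    have hs2 : s ^ 2 = r ^ 2 - ε ^ 2 / 4 := Real.sq_sqrt hnn
    have hslt : s < r := by nlinarith [hε.1.le, hε.1]
    have hrs : 0 < r + s := by linarith
    rw [ENNReal.ofReal_lt_ofReal_iff (by positivity)]
    apply one_div_lt_one_div_of_lt (by positivity)
    linarith
end

section
/- Let r > 0 and let Ω be a subset of a real Hilbert space X of dimension at least 2. If Ω is connected, possesses the arc property for radius r, and contains two points at distance greater than 2r, then Ω = X. -/
open Metric Set Filter
open scoped InnerProductSpace ENNReal Topology

variable {X : Type*} [NormedAddCommGroup X] [InnerProductSpace ℝ X] [CompleteSpace X]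

/-- `A` is a short arc of radius `r` joining `x` and `y`: either `x = y` and `A = {x}`,
or `x ≠ y` and `A` is the not-longer closed arc of a circle of radius `r`
(lying in a two-dimensional plane through its center `c`) through `x` and `y`.
The not-longer arc is characterized as `{z on the circle | ⟪v, z - c⟫ ≥ ⟪v, x - c⟫}`
for a nonzero vector `v` of the plane orthogonal to `x - y` with `⟪v, x - c⟫ ≥ 0`. -/
def IsShortArc (r : ℝ) (x y : X) (A : Set X) : Prop :=
  (x = y ∧ A = {x}) ∨
  (x ≠ y ∧ ∃ (c v : X) (P : Submodule ℝ X), Module.finrank ℝ P = 2 ∧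
    x - c ∈ P ∧ y - c ∈ P ∧ v ∈ P ∧ v ≠ 0 ∧
    ⟪v, x - y⟫_ℝ = 0 ∧ 0 ≤ ⟪v, x - c⟫_ℝ ∧
    ‖x - c‖ = r ∧ ‖y - c‖ = r ∧
    A = {z : X | z - c ∈ P ∧ ‖z - c‖ = r ∧ ⟪v, x - c⟫_ℝ ≤ ⟪v, z - c⟫_ℝ})

/-- `Ω` possesses the arc property for radius `r` if every short arc of radius `r`
joining two points of `Ω` is contained in `Ω`. -/
def ArcProperty (r : ℝ) (Ω : Set X) : Prop :=
  ∀ x ∈ Ω, ∀ y ∈ Ω, ∀ A : Set X, IsShortArc r x y A → A ⊆ Ω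

/-!
If two points of `Ω` are at distance `2r`, the arc property fills the closed ball of radius `r`
around their midpoint: first its boundary sphere, swept by half-circles through the two antipodal
points, then its interior, each inner point lying on a short arc whose endpoints are on that
sphere. Consequently the set `D` of centres of `r`-balls contained in `Ω` contains the midpoint of
every pair of points of `Ω` at distance `2r`. Two distinct centres `m, m'` with `‖m' - m‖ ≤ 2r`
yield such pairs in `ball m r ∪ ball m' r` with midpoints filling a ball around the midpoint of
`m` and `m'`. Applied to pairs of centres near the boundary of a `δ`-ball inside `D`, this enlarges
the ball by a fixed factor, so the set of points whose `δ`-ball lies in `D` is clopen, and `D` is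
the whole space. Connectedness of `Ω` enters only through intermediate values of the distance,
which provide a first pair at distance `2r` and then a second centre.
-/

section
variable {E : Type*} [NormedAddCommGroup E] [InnerProductSpace ℝ E]

lemma norm_smul_add_smul_sq {u w : E} (hu : ‖u‖ = 1) (hw : ‖w‖ = 1) (huw : ⟪u, w⟫_ℝ = 0)
    (a b : ℝ) : ‖a • u + b • w‖ ^ 2 = a ^ 2 + b ^ 2 := by
  rw [norm_add_sq_real, norm_smul, norm_smul, real_inner_smul_left, real_inner_smul_right, huw]
  simp [hu, hw]

lemma norm_smul_add_smul_eq {u w : E} (hu : ‖u‖ = 1) (hw : ‖w‖ = 1) (huw : ⟪u, w⟫_ℝ = 0)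
    {a b r : ℝ} (hr : 0 ≤ r) (h : a ^ 2 + b ^ 2 = r ^ 2) : ‖a • u + b • w‖ = r :=
  (sq_eq_sq₀ (norm_nonneg _) hr).1 ((norm_smul_add_smul_sq hu hw huw a b).trans h)

lemma norm_smul_add_smul_lt {u w : E} (hu : ‖u‖ = 1) (hw : ‖w‖ = 1) (huw : ⟪u, w⟫_ℝ = 0)
    {a b r : ℝ} (hr : 0 ≤ r) (h : a ^ 2 + b ^ 2 < r ^ 2) : ‖a • u + b • w‖ < r :=
  lt_of_pow_lt_pow_left₀ 2 hr ((norm_smul_add_smul_sq hu hw huw a b).trans_lt h)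

lemma finrank_span_eq_two {u w : E} (hu : ‖u‖ = 1) (hw : ‖w‖ = 1) (huw : ⟪u, w⟫_ℝ = 0) :
    Module.finrank ℝ (Submodule.span ℝ (range ![u, w])) = 2 := by
  have : Orthonormal ℝ ![u, w] := by
    rw [orthonormal_iff_ite]
    intro i j
    fin_cases i <;> fin_cases j <;> simp [hu, hw, huw, real_inner_comm u w]
  simpa using finrank_span_eq_card this.linearIndependent

lemma nontrivial_of_two_le_rank (hdim : 2 ≤ Module.rank ℝ E) : Nontrivial E :=
  rank_pos_iff_nontrivial.1 (lt_of_lt_of_le (by norm_num) hdim)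

lemma exists_norm_eq_one_smul [Nontrivial E] (z : E) : ∃ u : E, ‖u‖ = 1 ∧ z = ‖z‖ • u := by
  by_cases hz : z = 0
  · obtain ⟨u, hu⟩ := exists_ne (0 : E)
    exact ⟨‖u‖⁻¹ • u, by simpa using norm_smul_inv_norm (𝕜 := ℝ) hu, by simp [hz]⟩
  · refine ⟨‖z‖⁻¹ • z, by simpa using norm_smul_inv_norm (𝕜 := ℝ) hz, ?_⟩
    rw [smul_smul, mul_inv_cancel₀ (norm_ne_zero_iff.2 hz), one_smul]

lemma exists_unit_orthogonal (hdim : 2 ≤ Module.rank ℝ E) (v : E) :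
    ∃ w : E, ‖w‖ = 1 ∧ ⟪v, w⟫_ℝ = 0 := by
  have hK : (ℝ ∙ v)ᗮ ≠ ⊥ := by
    rw [Ne, Submodule.orthogonal_eq_bot_iff]
    intro htop
    have : Module.rank ℝ E ≤ 1 := by
      rw [← rank_top ℝ E, ← htop]
      simpa using rank_span_le (R := ℝ) ({v} : Set E)
    exact absurd (hdim.trans this) (by norm_num)
  obtain ⟨w, hw, hw0⟩ := Submodule.exists_mem_ne_zero_of_ne_bot hK
  refine ⟨‖w‖⁻¹ • w, by simpa using norm_smul_inv_norm (𝕜 := ℝ) hw0, ?_⟩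
  rw [real_inner_smul_right, Submodule.mem_orthogonal_singleton_iff_inner_right.1 hw, mul_zero]

lemma exists_eq_smul_add_smul (hdim : 2 ≤ Module.rank ℝ E) {u : E} (hu : ‖u‖ = 1) (z : E) :
    ∃ (w : E) (t : ℝ), ‖w‖ = 1 ∧ ⟪u, w⟫_ℝ = 0 ∧ 0 ≤ t ∧ z = ⟪u, z⟫_ℝ • u + t • w := by
  set τ := z - ⟪u, z⟫_ℝ • u with hτ
  have huτ : ⟪u, τ⟫_ℝ = 0 := by
    rw [hτ, inner_sub_right, real_inner_smul_right, real_inner_self_eq_norm_sq, hu]; ring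
  obtain ⟨w, hw, huw, hτw⟩ : ∃ w : E, ‖w‖ = 1 ∧ ⟪u, w⟫_ℝ = 0 ∧ τ = ‖τ‖ • w := by
    by_cases hτ0 : τ = 0
    · obtain ⟨w, hw, huw⟩ := exists_unit_orthogonal hdim u
      exact ⟨w, hw, huw, by simp [hτ0]⟩
    · refine ⟨‖τ‖⁻¹ • τ, by simpa using norm_smul_inv_norm (𝕜 := ℝ) hτ0, ?_, ?_⟩
      · rw [real_inner_smul_right, huτ, mul_zero]
      · rw [smul_smul, mul_inv_cancel₀ (norm_ne_zero_iff.2 hτ0), one_smul]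
  exact ⟨w, ‖τ‖, hw, huw, norm_nonneg τ, by rw [← hτw, hτ, add_sub_cancel]⟩

lemma IsPreconnected.exists_mem_dist_eq {F : Type*} [PseudoMetricSpace F] {Ω : Set F}
    (hΩ : IsPreconnected Ω) {a b : F} (ha : a ∈ Ω) (hb : b ∈ Ω) {ρ : ℝ} (hρ₀ : 0 ≤ ρ)
    (hρ : ρ ≤ dist b a) : ∃ y ∈ Ω, dist y a = ρ :=
  hΩ.intermediate_value ha hb (continuous_id.dist continuous_const).continuousOn
    ⟨by simpa using hρ₀, hρ⟩

lemma isClosed_setOf_ball_subset {F : Type*} [PseudoMetricSpace F] (r : ℝ) (S : Set F) :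
    IsClosed {c | ball c r ⊆ S} := by
  have : {c | ball c r ⊆ S} = (thickening r Sᶜ)ᶜ := by
    ext c
    simp only [mem_ofPred_eq, mem_compl_iff, mem_thickening_iff, not_exists, not_and, not_lt]
    refine ⟨fun h x hx => ?_, fun h x hx => ?_⟩
    · by_contra! hlt
      exact hx (h (by rwa [mem_ball, dist_comm]))
    · by_contra hxS
      exact (h x hxS).not_gt (by rwa [mem_ball, dist_comm] at hx)
  rw [this]
  exact isOpen_thickening.isClosed_compl

variable {r : ℝ} {Ω : Set E}

-- `{c + (s • u + t • w) | s ^ 2 + t ^ 2 = r ^ 2, α ≤ t}` is the short arc joining the two given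
-- points; `0 ≤ α` places it on the minor side of their chord.
theorem ArcProperty.add_smul_add_smul_mem (harc : ArcProperty r Ω) (hr : 0 ≤ r) {c u w : E}
    (hu : ‖u‖ = 1) (hw : ‖w‖ = 1) (huw : ⟪u, w⟫_ℝ = 0) {α β : ℝ} (hα : 0 ≤ α) (hβ : β ≠ 0)
    (hαβ : β ^ 2 + α ^ 2 = r ^ 2) (hx : c + (β • u + α • w) ∈ Ω)
    (hy : c + ((-β) • u + α • w) ∈ Ω) {s t : ℝ} (hst : s ^ 2 + t ^ 2 = r ^ 2) (ht : α ≤ t) :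
    c + (s • u + t • w) ∈ Ω := by
  set P := Submodule.span ℝ (range ![u, w])
  have hP : ∀ a b : ℝ, a • u + b • w ∈ P := fun a b =>
    P.add_mem (P.smul_mem a (Submodule.subset_span ⟨0, rfl⟩))
      (P.smul_mem b (Submodule.subset_span ⟨1, rfl⟩))
  have hinner : ∀ a b : ℝ, ⟪w, a • u + b • w⟫_ℝ = b := fun a b => by
    rw [inner_add_right, real_inner_smul_right, real_inner_smul_right, real_inner_comm, huw,
      real_inner_self_eq_norm_sq, hw]
    ring
  refine harc _ hx _ hy {z | z - c ∈ P ∧ ‖z - c‖ = r ∧ α ≤ ⟪w, z - c⟫_ℝ}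
    (Or.inr ⟨?_, c, w, P, finrank_span_eq_two hu hw huw, ?_⟩)
    ⟨by rw [add_sub_cancel_left]; exact hP s t,
      by rw [add_sub_cancel_left]; exact norm_smul_add_smul_eq hu hw huw hr hst,
      by rwa [add_sub_cancel_left, hinner]⟩
  · intro hxy
    have := congrArg (fun z => ⟪u, z - c⟫_ℝ) hxy
    simp only [add_sub_cancel_left, inner_add_right, real_inner_smul_right, huw,
      real_inner_self_eq_norm_sq, hu] at this
    exact hβ (by linarith)
  · rw [add_sub_cancel_left, add_sub_cancel_left, hinner]
    refine ⟨hP _ _, hP _ _, by simpa using hP 0 1, ?_, ?_, hα,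
      norm_smul_add_smul_eq hu hw huw hr hαβ,
      norm_smul_add_smul_eq hu hw huw hr (by rw [neg_sq, hαβ]), rfl⟩
    · rintro rfl
      simp at hw
    · rw [show c + (β • u + α • w) - (c + ((-β) • u + α • w)) = (2 * β) • u + (0 : ℝ) • w by
        module, hinner]

theorem ArcProperty.sphere_subset (harc : ArcProperty r Ω) (hdim : 2 ≤ Module.rank ℝ E)
    (hr : 0 < r) {m u : E} (hu : ‖u‖ = 1) (h₁ : m + r • u ∈ Ω) (h₂ : m - r • u ∈ Ω) :
    sphere m r ⊆ Ω := by
  intro z hz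
  obtain ⟨w, t, hw, huw, ht, hzm⟩ := exists_eq_smul_add_smul hdim hu (z - m)
  have hst : ⟪u, z - m⟫_ℝ ^ 2 + t ^ 2 = r ^ 2 := by
    rw [← norm_smul_add_smul_sq hu hw huw, ← hzm, ← dist_eq_norm, mem_sphere.1 hz]
  have := harc.add_smul_add_smul_mem hr.le hu hw huw le_rfl hr.ne' (by ring)
    (by simpa using h₁) (by simpa [sub_eq_add_neg] using h₂) hst ht
  rwa [← hzm, add_sub_cancel] at this

theorem ArcProperty.closedBall_subset (harc : ArcProperty r Ω) (hdim : 2 ≤ Module.rank ℝ E)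
    (hr : 0 < r) {m u : E} (hu : ‖u‖ = 1) (h₁ : m + r • u ∈ Ω) (h₂ : m - r • u ∈ Ω) :
    closedBall m r ⊆ Ω := by
  intro p hp
  rw [mem_closedBall, dist_eq_norm] at hp
  obtain hpr | hpr := hp.eq_or_lt
  · exact harc.sphere_subset hdim hr hu h₁ h₂ (by rwa [mem_sphere, dist_eq_norm])
  have := nontrivial_of_two_le_rank hdim
  obtain ⟨v, hv, hpv⟩ := exists_norm_eq_one_smul (p - m)
  obtain ⟨w, hw, hvw⟩ := exists_unit_orthogonal hdim v
  set s := ‖p - m‖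
  set α := (r + s) / 2
  set β := √(r ^ 2 - α ^ 2)
  have hα₀ : 0 < α := by positivity
  have hαr : α < r := by simp only [α]; linarith
  have hβ : 0 < β := Real.sqrt_pos.2 (by nlinarith)
  have hαβ : β ^ 2 + α ^ 2 = r ^ 2 := by rw [Real.sq_sqrt (by nlinarith)]; ring
  -- the circle of radius `r` around `c` in the plane of `v, w` meets the sphere `sphere m r`
  -- at `c + (± β • w + α • -v)` and passes through `p = c - r • v`
  set c := m + (r + s) • v
  have hsphere : ∀ b : ℝ, b ^ 2 = β ^ 2 → c + (b • w + α • -v) ∈ Ω := fun b hb => by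
    refine harc.sphere_subset hdim hr hu h₁ h₂ ?_
    rw [mem_sphere, dist_eq_norm,
      show c + (b • w + α • -v) - m = α • v + b • w by simp only [c, α]; module]
    exact norm_smul_add_smul_eq hv hw hvw hr.le (by rw [hb, ← hαβ]; ring)
  have := harc.add_smul_add_smul_mem hr.le hw (by rw [norm_neg, hv])
    (by rw [inner_neg_right, real_inner_comm, hvw, neg_zero]) hα₀.le hβ.ne' hαβ
    (hsphere β rfl) (hsphere (-β) (by ring)) (s := 0) (t := r) (by ring) hαr.le
  convert this using 1
  rw [← sub_add_cancel p m, hpv]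
  simp only [c]
  module

lemma exists_sub_smul_mem_ball_add_smul_mem_ball (hdim : 2 ≤ Module.rank ℝ E) (hr : 0 < r)
    {m m' t : E} (hmm' : m ≠ m') (h2r : ‖m' - m‖ ≤ 2 * r)
    (ht : ‖t - midpoint ℝ m m'‖ ≤ ‖m' - m‖ / 8) :
    ∃ n : E, ‖n‖ = 1 ∧ t - r • n ∈ ball m r ∧ t + r • n ∈ ball m' r := by
  have := nontrivial_of_two_le_rank hdim
  obtain ⟨u, hu, hmu⟩ := exists_norm_eq_one_smul (m' - m)
  set e := ‖m' - m‖
  have he : 0 < e := norm_pos_iff.2 (sub_ne_zero.2 hmm'.symm)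
  obtain ⟨w, η, hw, huw, hη, htm⟩ := exists_eq_smul_add_smul hdim hu (t - m)
  set s := ⟪u, t - m⟫_ℝ
  have hmid : t - midpoint ℝ m m' = (s - e / 2) • u + η • w := by
    rw [← sub_sub_sub_cancel_right t _ m, midpoint_sub_left, htm, hmu, invOf_eq_inv]
    module
  have hst : (s - e / 2) ^ 2 + η ^ 2 ≤ (e / 8) ^ 2 := by
    rw [← norm_smul_add_smul_sq hu hw huw, ← hmid]
    gcongr
  obtain ⟨hs₁, hs₂⟩ := abs_le_of_sq_le_sq' (by nlinarith : (s - e / 2) ^ 2 ≤ (e / 8) ^ 2)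
    (by positivity)
  have hηe : η ≤ e / 8 :=
    (abs_le_of_sq_le_sq' (by nlinarith : η ^ 2 ≤ (e / 8) ^ 2) (by positivity)).2
  set γ := √(r ^ 2 - η ^ 2)
  have hγ₀ : 0 ≤ γ := Real.sqrt_nonneg _
  have hγ2 : γ ^ 2 = r ^ 2 - η ^ 2 := Real.sq_sqrt (by nlinarith)
  have hγ : 7 / 8 * r ≤ γ := (Real.le_sqrt (by positivity) (by nlinarith)).2 (by nlinarith)
  have hγr : γ ≤ r := by nlinarith
  -- `t - r • n` lies on the line through `m` and `m'`, and `γ ≥ 7r/8` gives both distance bounds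
  set n := (γ / r) • u + (η / r) • w
  have hrn : r • n = γ • u + η • w := by
    simp only [n, smul_add, smul_smul, mul_div_cancel₀ _ hr.ne']
  refine ⟨n, norm_smul_add_smul_eq hu hw huw zero_le_one (by field_simp; linarith), ?_, ?_⟩
  · rw [mem_ball, dist_eq_norm, sub_right_comm, htm, hrn,
      show s • u + η • w - (γ • u + η • w) = (s - γ) • u + (0 : ℝ) • w by module]
    exact norm_smul_add_smul_lt hu hw huw hr.le (by nlinarith)
  · rw [mem_ball, dist_eq_norm, show t + r • n - m' = (t - m) - (m' - m) + r • n by abel, htm, hmu,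
      hrn, show s • u + η • w - e • u + (γ • u + η • w) = (s + γ - e) • u + (2 * η) • w by module]
    exact norm_smul_add_smul_lt hu hw huw hr.le (by nlinarith)

theorem ArcProperty.closedBall_subset_of_ball_subset (harc : ArcProperty r Ω)
    (hdim : 2 ≤ Module.rank ℝ E) (hr : 0 < r) {m m' t : E} (hm : ball m r ⊆ Ω)
    (hm' : ball m' r ⊆ Ω) (hmm' : m ≠ m') (h2r : ‖m' - m‖ ≤ 2 * r)
    (ht : ‖t - midpoint ℝ m m'‖ ≤ ‖m' - m‖ / 8) : closedBall t r ⊆ Ω := by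
  obtain ⟨n, hn, hx, hy⟩ := exists_sub_smul_mem_ball_add_smul_mem_ball hdim hr hmm' h2r ht
  exact harc.closedBall_subset hdim hr hn (hm' hy) (hm hx)

theorem ArcProperty.closedBall_subset_setOf_ball_subset (harc : ArcProperty r Ω)
    (hdim : 2 ≤ Module.rank ℝ E) (hr : 0 < r) {z : E} {δ : ℝ} (hδ : 0 < δ) (hδr : δ ≤ r)
    (hz : closedBall z δ ⊆ {c | ball c r ⊆ Ω}) :
    closedBall z (103 / 100 * δ) ⊆ {c | ball c r ⊆ Ω} := by
  intro p hp
  rw [mem_closedBall, dist_eq_norm] at hp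
  obtain hpδ | hpδ := le_or_gt ‖p - z‖ δ
  · exact hz (by rwa [mem_closedBall, dist_eq_norm])
  have := nontrivial_of_two_le_rank hdim
  obtain ⟨n, hn, hpn⟩ := exists_norm_eq_one_smul (p - z)
  obtain ⟨v, hv, hnv⟩ := exists_unit_orthogonal hdim n
  -- two centres on `sphere z δ`, since `24 ^ 2 + 7 ^ 2 = 25 ^ 2`
  set a := 24 / 25 * δ with ha
  set b := 7 / 25 * δ with hb
  have hcentre : ∀ b' : ℝ, b' ^ 2 = b ^ 2 → ball (z + (a • n + b' • v)) r ⊆ Ω := fun b' hb' =>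
    hz <| by
      rw [mem_closedBall, dist_eq_norm, add_sub_cancel_left,
        norm_smul_add_smul_eq hn hv hnv hδ.le (by rw [hb']; ring)]
  have hdist : ‖z + (a • n + b • v) - (z + (a • n + (-b) • v))‖ = 2 * b := by
    rw [show z + (a • n + b • v) - (z + (a • n + (-b) • v)) = (2 * b) • v by module, norm_smul,
      hv, mul_one, Real.norm_of_nonneg (by positivity)]
  have hmid : midpoint ℝ (z + (a • n + (-b) • v)) (z + (a • n + b • v)) = z + a • n := by
    rw [midpoint_eq_smul_add, invOf_eq_inv]
    module
  refine ball_subset_closedBall.trans <| harc.closedBall_subset_of_ball_subset hdim hr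
    (hcentre (-b) (by ring)) (hcentre b rfl) (fun h => ?_) (by linarith) ?_
  · rw [h, sub_self, norm_zero] at hdist
    linarith
  · rw [hdist, hmid, show p - (z + a • n) = (‖p - z‖ - a) • n by rw [← sub_sub, sub_smul, ← hpn],
      norm_smul, hn, mul_one, Real.norm_of_nonneg (by linarith)]
    linarith

theorem ArcProperty.setOf_ball_subset_eq_univ (harc : ArcProperty r Ω)
    (hdim : 2 ≤ Module.rank ℝ E) (hr : 0 < r) {m m' : E} (hm : ball m r ⊆ Ω)
    (hm' : ball m' r ⊆ Ω) (hmm' : m ≠ m') (h2r : ‖m' - m‖ ≤ 2 * r) :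
    {c | ball c r ⊆ Ω} = univ := by
  set D := {c | ball c r ⊆ Ω}
  set δ := ‖m' - m‖ / 8
  have hδ : 0 < δ := by have := norm_pos_iff.2 (sub_ne_zero.2 hmm'.symm); positivity
  have hA : IsClopen {z | ball z δ ⊆ D} := by
    refine ⟨isClosed_setOf_ball_subset δ D, isOpen_iff.2 fun z hz => ⟨3 / 100 * δ, by positivity,
      fun z' hz' => ?_⟩⟩
    have hzD : closedBall z δ ⊆ D := by
      rw [← closure_ball z hδ.ne']
      exact closure_minimal hz (isClosed_setOf_ball_subset r Ω)
    refine ball_subset_closedBall.trans <| (closedBall_subset_closedBall' ?_).trans <|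
      harc.closedBall_subset_setOf_ball_subset hdim hr hδ (by simp only [δ]; linarith) hzD
    rw [mem_ball] at hz'
    linarith
  have hmid : midpoint ℝ m m' ∈ {z | ball z δ ⊆ D} := fun t ht =>
    ball_subset_closedBall.trans <| harc.closedBall_subset_of_ball_subset hdim hr hm hm' hmm' h2r
      (by rw [mem_ball, dist_eq_norm] at ht; exact ht.le)
  exact eq_univ_of_forall fun c => eq_univ_iff_forall.1 (hA.eq_univ ⟨_, hmid⟩) c (mem_ball_self hδ)

theorem ArcProperty.closedBall_midpoint_subset (harc : ArcProperty r Ω)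
    (hdim : 2 ≤ Module.rank ℝ E) (hr : 0 < r) {x y : E} (hx : x ∈ Ω) (hy : y ∈ Ω)
    (hxy : dist y x = 2 * r) : closedBall (midpoint ℝ x y) r ⊆ Ω := by
  have := nontrivial_of_two_le_rank hdim
  obtain ⟨u, hu, hyu⟩ := exists_norm_eq_one_smul (y - x)
  rw [← dist_eq_norm, hxy] at hyu
  have hmid : midpoint ℝ x y = x + r • u := by
    rw [midpoint_eq_smul_add, invOf_eq_inv, ← sub_add_cancel y x, hyu]
    module
  rw [hmid]
  exact harc.closedBall_subset hdim hr hu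
    (by rwa [add_assoc, ← add_smul, ← two_mul, ← hyu, add_sub_cancel])
    (by rwa [add_sub_cancel_right])

theorem ArcProperty.exists_ne_ball_subset (harc : ArcProperty r Ω) (hdim : 2 ≤ Module.rank ℝ E)
    (hr : 0 < r) (hconn : IsPreconnected Ω) {m q : E} (hm : ball m r ⊆ Ω) (hq : q ∈ Ω)
    (hmq : r < dist q m) : ∃ m', ball m' r ⊆ Ω ∧ m ≠ m' ∧ ‖m' - m‖ ≤ 2 * r := by
  set ρ := min (dist q m) (2 * r)
  have hρ : r < ρ := lt_min hmq (by linarith)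
  obtain ⟨y, hy, hyρ⟩ := hconn.exists_mem_dist_eq (hm (mem_ball_self hr)) hq (by linarith)
    (min_le_left _ _)
  have := nontrivial_of_two_le_rank hdim
  obtain ⟨u, hu, hyu⟩ := exists_norm_eq_one_smul (y - m)
  rw [← dist_eq_norm, hyρ] at hyu
  have hm'm : (m + (ρ - r) • u) - m = (ρ - r) • u := add_sub_cancel_left _ _
  have hnorm : ‖(m + (ρ - r) • u) - m‖ = ρ - r := by
    rw [hm'm, norm_smul, hu, mul_one, Real.norm_of_nonneg (by linarith)]
  refine ⟨m + (ρ - r) • u, ball_subset_closedBall.trans <| harc.closedBall_subset hdim hr hu ?_ ?_,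
    fun h => ?_, by linarith [min_le_right (dist q m) (2 * r)]⟩
  · rwa [show m + (ρ - r) • u + r • u = m + ρ • u by module, ← hyu, add_sub_cancel]
  · refine hm ?_
    rw [mem_ball, dist_eq_norm, show m + (ρ - r) • u - r • u - m = (ρ - 2 * r) • u by module,
      norm_smul, hu, mul_one, Real.norm_eq_abs, abs_lt]
    constructor <;> linarith [min_le_right (dist q m) (2 * r)]
  · rw [← h, sub_self, norm_zero] at hnorm
    linarith

end

/-- If `Ω` is connected, possesses the arc property for radius `r`, and contains
two points at distance greater than `2r`, then `Ω` is the whole space. -/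
theorem eq_univ_of_arcProperty_of_far_points (hdim : 2 ≤ Module.rank ℝ X) {r : ℝ}
    (hr : 0 < r) {Ω : Set X} (hconn : IsPreconnected Ω) (harc : ArcProperty r Ω)
    (hfar : ∃ x ∈ Ω, ∃ y ∈ Ω, 2 * r < ‖x - y‖) : Ω = univ := by
  obtain ⟨x, hx, y, hy, hxy⟩ := hfar
  rw [← dist_eq_norm, dist_comm] at hxy
  obtain ⟨z, hz, hzx⟩ := hconn.exists_mem_dist_eq hx hy (ρ := 2 * r) (by positivity) hxy.le
  have hball := harc.closedBall_midpoint_subset hdim hr hx hz hzx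
  have hyfar : r < dist y (midpoint ℝ x z) := by
    have := dist_triangle y (midpoint ℝ x z) x
    rw [dist_midpoint_left, dist_comm x z, hzx, Real.norm_two] at this
    linarith
  obtain ⟨m', hm', hne, h2r⟩ := harc.exists_ne_ball_subset hdim hr hconn
    (ball_subset_closedBall.trans hball) hy hyfar
  have hD := harc.setOf_ball_subset_eq_univ hdim hr (ball_subset_closedBall.trans hball) hm' hne h2r
  exact eq_univ_of_forall fun c => eq_univ_iff_forall.1 hD c (mem_ball_self hr)
end

section
/- A closed subset Ω of a real Hilbert space is r-convex if and only if Ω is convex and Ω ⊆ B̄(x − r·v, r) for every boundary point x ∈ ∂Ω and every unit normal v to Ω at x. -/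
open Metric Set Filter
open scoped InnerProductSpace ENNReal Topology

variable {X : Type*} [NormedAddCommGroup X] [InnerProductSpace ℝ X] [CompleteSpace X]

lemma segment_subset_lens (r : ℝ) (x y : X) : segment ℝ x y ⊆ lens r x y := by
  intro u hu
  simp only [lens, mem_iInter, mem_setOf_eq]
  rintro c ⟨hc1, hc2⟩
  exact (convex_closedBall c r).segment_subset hc1 hc2 hu

set_option maxHeartbeats 2000000 in
/-- A closed set `Ω` is `r`-convex if and only if it is convex and
`Ω ⊆ B̄(x - r·v, r)` for every `x ∈ ∂Ω` and every unit normal `v` to `Ω` at `x`. -/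
theorem isRConvex_iff_unit_normals (hdim : 2 ≤ Module.rank ℝ X) {r : ℝ} (hr : 0 < r)
    {Ω : Set X} (hcl : IsClosed Ω) :
    IsRConvex r Ω ↔ Convex ℝ Ω ∧ ∀ x ∈ frontier Ω, ∀ v : X, ‖v‖ = 1 →
      (∀ z ∈ Ω, ⟪v, z - x⟫_ℝ ≤ 0) → Ω ⊆ closedBall (x - r • v) r := by
  constructor
  · intro hRC
    constructor
    · exact convex_iff_segment_subset.mpr fun x hx y hy =>
        (segment_subset_lens r x y).trans (hRC x hx y hy)
    · intro x hx v hv hn z hz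
      have hxΩ : x ∈ Ω := by
        have := frontier_subset_closure hx
        rwa [hcl.closure_eq] at this
      rw [mem_closedBall]
      by_contra hcon
      push_neg at hcon
      obtain ⟨d, hdd⟩ : ∃ d : X, d = z - x := ⟨_, rfl⟩
      obtain ⟨D, hDdef⟩ : ∃ D : ℝ, D = ‖d‖ ^ 2 := ⟨_, rfl⟩
      have hb0 : ⟪v, d⟫_ℝ ≤ 0 := hdd ▸ hn z hz
      obtain ⟨b, hbdef⟩ : ∃ b : ℝ, b = -⟪v, d⟫_ℝ := ⟨_, rfl⟩
      have hvd : ⟪v, d⟫_ℝ = -b := by rw [hbdef]; ring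
      have hdv : ⟪d, v⟫_ℝ = -b := by rw [real_inner_comm]; exact hvd
      have hb : 0 ≤ b := by rw [hbdef]; linarith
      have hvv : ⟪v, v⟫_ℝ = 1 := by
        rw [real_inner_self_eq_norm_sq, hv]; norm_num
      have hdD : ⟪d, d⟫_ℝ = D := by rw [hDdef]; exact real_inner_self_eq_norm_sq d
      have hD0' : 0 ≤ D := hDdef ▸ sq_nonneg _
      -- From the contradiction hypothesis: D - 2 r b > 0.
      have hK : 0 < D - 2 * r * b := by
        have h1 : r < ‖d + r • v‖ := by
          have heq : dist z (x - r • v) = ‖d + r • v‖ := by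
            rw [dist_eq_norm, hdd]; congr 1; abel
          rwa [heq] at hcon
        have h2 : ‖d + r • v‖ ^ 2 = D - 2 * r * b + r ^ 2 := by
          rw [← real_inner_self_eq_norm_sq]
          simp only [inner_add_left, inner_add_right, real_inner_smul_left,
            real_inner_smul_right, hvv, hdD, hvd, hdv]
          ring
        have h3 : r ^ 2 < ‖d + r • v‖ ^ 2 := pow_lt_pow_left₀ h1 hr.le two_ne_zero
        linarith
      have hrb : 0 ≤ 2 * r * b := by positivity
      have hD0 : 0 < D := by linarith
      have hbD : b ^ 2 ≤ D := by
        have h1 : -⟪v, d⟫_ℝ ≤ ‖v‖ * ‖d‖ := by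
          have := real_inner_le_norm v (-d)
          simpa [inner_neg_right] using this
        rw [hv, one_mul, hvd] at h1
        have h2 : b ≤ ‖d‖ := by linarith
        have h3 := pow_le_pow_left₀ hb h2 2
        linarith [hDdef ▸ h3]
      obtain ⟨s, hsdef⟩ : ∃ s : ℝ, s = (D - 2 * r * b) / (2 * D) := ⟨_, rfl⟩
      have hs0 : 0 < s := hsdef ▸ div_pos hK (by linarith)
      have hsD : s * D = (D - 2 * r * b) / 2 := by
        rw [hsdef]; field_simp
      have hs1 : s ≤ 1 := by
        rw [hsdef, div_le_one (by linarith)]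
        linarith
      obtain ⟨ε, hεdef⟩ : ∃ ε : ℝ, ε = min 1 (s * (D - 2 * r * b) / (2 * (2 * r + 1))) :=
        ⟨_, rfl⟩
      have hε0 : 0 < ε := hεdef ▸ lt_min one_pos (by positivity)
      have hε1 : ε ≤ 1 := hεdef ▸ min_le_left _ _
      have hε2 : ε ≤ s * (D - 2 * r * b) / (2 * (2 * r + 1)) := hεdef ▸ min_le_right _ _
      obtain ⟨t, htdef⟩ : ∃ t : ℝ, t = s * b + ε := ⟨_, rfl⟩
      have ht0 : 0 ≤ t := by rw [htdef]; positivity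
      have hs2D : s ^ 2 * D = s * (D - 2 * r * b) / 2 := by
        rw [pow_two, mul_assoc, hsD]; ring
      have hεsq : ε ^ 2 ≤ ε := by
        have h := mul_le_mul_of_nonneg_left hε1 hε0.le
        calc ε ^ 2 = ε * ε := pow_two ε
          _ ≤ ε * 1 := h
          _ = ε := mul_one ε
      have hε3 : (2 * r + 1) * ε ≤ s * (D - 2 * r * b) / 2 := by
        calc (2 * r + 1) * ε ≤ (2 * r + 1) * (s * (D - 2 * r * b) / (2 * (2 * r + 1))) :=
              mul_le_mul_of_nonneg_left hε2 (by linarith)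
          _ = s * (D - 2 * r * b) / 2 := by field_simp
      have KEY : 0 ≤ s * D - s ^ 2 * D + 2 * s * t * b - 2 * t * r - t ^ 2 := by
        rw [htdef]
        have h1 := sq_nonneg (s * b)
        nlinarith [h1, hεsq, hε3, hs2D]
      obtain ⟨w, hwdef⟩ : ∃ w : X, w = x + s • d + t • v := ⟨_, rfl⟩
      have hwlens : w ∈ lens r x z := by
        simp only [lens, mem_iInter, mem_setOf_eq]
        rintro c ⟨hc1, hc2⟩
        rw [mem_closedBall, dist_eq_norm] at hc1 hc2 ⊢
        obtain ⟨e, hedef⟩ : ∃ e : X, e = c - x := ⟨_, rfl⟩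
        have he1 : ‖e‖ ≤ r := by
          rw [hedef, norm_sub_rev]; exact hc1
        have he2 : ‖d - e‖ ≤ r := by
          have heq : z - c = d - e := by rw [hdd, hedef]; abel
          rwa [heq] at hc2
        have hwc : w - c = s • d + t • v - e := by
          rw [hwdef, hedef]; abel
        rw [hwc]
        have hed : ⟪e, d⟫_ℝ = ⟪d, e⟫_ℝ := real_inner_comm _ _
        have hev : ⟪e, v⟫_ℝ = ⟪v, e⟫_ℝ := real_inner_comm _ _
        have he1sq : ⟪e, e⟫_ℝ ≤ r ^ 2 := by
          rw [real_inner_self_eq_norm_sq]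
          exact pow_le_pow_left₀ (norm_nonneg e) he1 2
        have he2sq : D - 2 * ⟪d, e⟫_ℝ + ⟪e, e⟫_ℝ ≤ r ^ 2 := by
          have h : ‖d - e‖ ^ 2 ≤ r ^ 2 := pow_le_pow_left₀ (norm_nonneg _) he2 2
          rw [← real_inner_self_eq_norm_sq] at h
          simp only [inner_sub_left, inner_sub_right, hed, hdD] at h
          linarith
        have hve : -r ≤ ⟪v, e⟫_ℝ := by
          have h1 : ⟪v, -e⟫_ℝ ≤ ‖v‖ * ‖-e‖ := real_inner_le_norm v (-e)
          rw [hv, one_mul, norm_neg, inner_neg_right] at h1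
          linarith
        have hexp : ‖s • d + t • v - e‖ ^ 2 =
            s ^ 2 * D + t ^ 2 + ⟪e, e⟫_ℝ - 2 * s * t * b
              - 2 * s * ⟪d, e⟫_ℝ - 2 * t * ⟪v, e⟫_ℝ := by
          rw [← real_inner_self_eq_norm_sq]
          simp only [inner_sub_left, inner_sub_right, inner_add_left, inner_add_right,
            real_inner_smul_left, real_inner_smul_right, hvv, hdD, hvd, hdv, hed, hev]
          ring
        have hfin : ‖s • d + t • v - e‖ ^ 2 ≤ r ^ 2 := by
          rw [hexp]
          have p1 := mul_nonneg hs0.le (by linarith :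
              (0:ℝ) ≤ r ^ 2 + 2 * ⟪d, e⟫_ℝ - D - ⟪e, e⟫_ℝ)
          have p2 := mul_nonneg ht0 (by linarith : (0:ℝ) ≤ ⟪v, e⟫_ℝ + r)
          have p3 := mul_nonneg (by linarith : (0:ℝ) ≤ 1 - s)
              (by linarith : (0:ℝ) ≤ r ^ 2 - ⟪e, e⟫_ℝ)
          linarith [KEY, p1, p2, p3]
        have hsqrt := Real.sqrt_le_sqrt hfin
        rwa [Real.sqrt_sq (norm_nonneg _), Real.sqrt_sq hr.le] at hsqrt
      have hwΩ : w ∈ Ω := hRC x hxΩ z hz hwlens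
      have hcontra := hn w hwΩ
      have hwx : w - x = s • d + t • v := by rw [hwdef]; abel
      have hval : ⟪v, w - x⟫_ℝ = t - s * b := by
        rw [hwx]
        simp only [inner_add_right, real_inner_smul_right, hvv, hvd]
        ring
      rw [hval] at hcontra
      rw [htdef] at hcontra
      linarith
  · rintro ⟨hconv, hball⟩ x hx y hy w hw
    by_contra hwΩ
    obtain ⟨p, hpΩ, hpmin⟩ :=
      exists_norm_eq_iInf_of_complete_convex ⟨x, hx⟩ hcl.isComplete hconv w
    have hproj : ∀ z ∈ Ω, ⟪w - p, z - p⟫_ℝ ≤ 0 :=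
      (norm_eq_iInf_iff_real_inner_le_zero hconv hpΩ).1 hpmin
    have hwp : w - p ≠ 0 := sub_ne_zero.mpr fun h => hwΩ (h ▸ hpΩ)
    obtain ⟨δ, hδdef⟩ : ∃ δ : ℝ, δ = ‖w - p‖ := ⟨_, rfl⟩
    have hδ0 : 0 < δ := hδdef ▸ norm_pos_iff.mpr hwp
    obtain ⟨v, hvdef⟩ : ∃ v : X, v = δ⁻¹ • (w - p) := ⟨_, rfl⟩
    have hv : ‖v‖ = 1 := by
      rw [hvdef, norm_smul, Real.norm_eq_abs, abs_of_pos (inv_pos.mpr hδ0), ← hδdef]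
      field_simp
    have hδv : δ • v = w - p := by
      rw [hvdef, smul_smul, mul_inv_cancel₀ hδ0.ne', one_smul]
    have hn : ∀ z ∈ Ω, ⟪v, z - p⟫_ℝ ≤ 0 := fun z hz => by
      rw [hvdef, real_inner_smul_left]
      exact mul_nonpos_of_nonneg_of_nonpos (by positivity) (hproj z hz)
    have hpf : p ∈ frontier Ω := by
      rw [hcl.frontier_eq]
      refine ⟨hpΩ, fun hint => ?_⟩
      obtain ⟨ε, hε0, hεsub⟩ := Metric.mem_nhds_iff.1 (mem_interior_iff_mem_nhds.1 hint)
      have hq : p + (ε / 2) • v ∈ Ω := by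
        apply hεsub
        rw [mem_ball, dist_eq_norm]
        have heq : p + (ε / 2) • v - p = (ε / 2) • v := by abel
        rw [heq, norm_smul, Real.norm_eq_abs, abs_of_pos (by linarith), hv]
        linarith
      have hle := hn _ hq
      have heq : p + (ε / 2) • v - p = (ε / 2) • v := by abel
      rw [heq, real_inner_smul_right, real_inner_self_eq_norm_sq, hv] at hle
      norm_num at hle
      linarith
    have hsub := hball p hpf v hv hn
    have hwball : w ∈ closedBall (p - r • v) r := by
      simp only [lens, mem_iInter, mem_setOf_eq] at hw
      exact hw _ ⟨hsub hx, hsub hy⟩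
    rw [mem_closedBall, dist_eq_norm] at hwball
    have heq : w - (p - r • v) = (δ + r) • v := by
      rw [add_smul, hδv]; abel
    rw [heq, norm_smul, Real.norm_eq_abs, abs_of_pos (by linarith), hv, mul_one] at hwball
    linarith
end

section
/- A closed subset Ω of a real Hilbert space is r-convex if and only if Ω is an intersection of closed balls of radius r: Ω = ⋂_{c ∈ M} B̄(c, r) for some set M of centers. -/
open Metric Set Filter
open scoped InnerProductSpace ENNReal Topology

variable {X : Type*} [NormedAddCommGroup X] [InnerProductSpace ℝ X] [CompleteSpace X]

section Auxiliary

set_option linter.unusedSectionVars false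

lemma sc1 {r d a s : ℝ} (hd0 : 0 < d) (hmain' : 2*r*(d*s) < d*a^2) : 2*r*s < a^2 := by
  have h9 : d*(2*r*s) < d*(a^2) := by linarith [hmain']
  exact (mul_lt_mul_iff_right₀ hd0).1 h9

lemma sc2 {r a s : ℝ} (hr : 0 < r) (ha : 0 < a) (h2r : a < 2*r) (hs : 0 ≤ s)
    (hsm : 2*r*s < a^2) : s < a ∧ s^2 < a^2 := by
  have hlt : s < a := by nlinarith
  exact ⟨hlt, by nlinarith [mul_self_lt_mul_self hs hlt]⟩

lemma sc3 {r a s h b d : ℝ} (hr : 0 < r) (ha : 0 < a) (hs : 0 ≤ s) (hd : 0 < d)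
    (hh0 : 0 < h) (hb0 : 0 < b) (hsm : 2*r*s < a^2)
    (hhsq : h^2 = r^2 - a^2/4) (hbsq : b^2 = 1 - s^2/a^2) :
    2*d*s < a^2*d*b/h := by
  have q2 : (2*s*h)^2 < (a^2*b)^2 := by
    have e1 : (2*s*h)^2 = 4*r^2*s^2 - a^2*s^2 := by rw [mul_pow, mul_pow, hhsq]; ring
    have e2 : (a^2*b)^2 = a^4 - a^2*s^2 := by
      rw [mul_pow, hbsq]; field_simp
    have : 4*r^2*s^2 < a^4 := by
      nlinarith [mul_self_lt_mul_self (by positivity : (0:ℝ) ≤ 2*r*s) hsm]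
    linarith [e1, e2, this]
  have q3 : 2*s*h < a^2*b := lt_of_pow_lt_pow_left₀ 2 (by positivity) q2
  rw [lt_div_iff₀ hh0]
  nlinarith

lemma sc6 {h δ C : ℝ} (e : (h-δ)^2 = h^2 + C) : δ^2 = C + 2*h*δ := by nlinarith [e]

lemma sc7 {h t C : ℝ} (h0 : 0 ≤ h) (t0 : 0 ≤ t) (ht : t^2 = C) : h^2 + C ≤ (h+t)^2 := by
  nlinarith

lemma sc4 {C D h t δ : ℝ} (ht : -δ ≤ t) (hδ : δ ≤ 0) (hsq : δ^2 = C + 2*h*δ)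
    (hD : D = 2*h + t) (hD0 : 0 < D) : C/D ≤ -δ := by
  rw [div_le_iff₀ hD0, hD]
  nlinarith

lemma sc5 {ε δ d s a b h C D : ℝ} (hδsq : δ^2 = C + 2*h*δ) (hfrac : C/D ≤ -δ)
    (hpos : 0 ≤ h + d*b) :
    ε^2*a^2 + δ^2 + 2*ε*(d*s) + 2*δ*(d*b) ≤ ε^2*a^2 + 2*d*s*ε + C - 2*(C/D)*(h+d*b) := by
  have := mul_le_mul_of_nonneg_right hfrac hpos
  nlinarith

lemma sc8 {x : ℝ} (h : x^2 = 1) (h0 : 0 ≤ x) : x = 1 := by nlinarith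

lemma sc9 {r a : ℝ} (hr : 0 < r) (h2r : a < 2*r) (ha : 0 < a) : 0 < r^2 - a^2/4 := by nlinarith


lemma norm_sq_inner (y : X) : ‖y‖^2 = ⟪y,y⟫_ℝ := (real_inner_self_eq_norm_sq y).symm

lemma norm_expand (Z V N : X) (ε δ : ℝ) :
    ‖Z - ε•V - δ•N‖^2 = ⟪Z,Z⟫_ℝ - 2*ε*⟪Z,V⟫_ℝ - 2*δ*⟪Z,N⟫_ℝ + ε^2*⟪V,V⟫_ℝ
      + 2*ε*δ*⟪V,N⟫_ℝ + δ^2*⟪N,N⟫_ℝ := by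
  rw [norm_sq_inner]
  simp only [inner_sub_left, inner_sub_right, real_inner_smul_left, real_inner_smul_right,
    real_inner_comm V Z, real_inner_comm N Z, real_inner_comm N V]
  ring

lemma norm_expand2 (V Z : X) (t : ℝ) :
    ‖V + t•Z‖^2 = ⟪V,V⟫_ℝ + 2*t*⟪Z,V⟫_ℝ + t^2*⟪Z,Z⟫_ℝ := by
  rw [norm_sq_inner]
  simp only [inner_add_left, inner_add_right, real_inner_smul_left, real_inner_smul_right,
    real_inner_comm V Z]
  ring


lemma sc10 {r d a S t : ℝ} (hr : 0 < r) (hd : 0 < d) (ha : 0 < a) (hS : 0 ≤ S)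
    (hm : 2*r*S < d*a^2) (ht : t = 1/2 + r*S/(d*a^2)) :
    1/2 ≤ t ∧ t < 1 ∧ 2*r*(t*S) < d*(t*a)^2 := by
  have hda : 0 < d*a^2 := by positivity
  have hu0 : 0 ≤ r*S/(d*a^2) := by positivity
  have ht0' : 1/2 ≤ t := by rw [ht]; linarith
  have hu12 : r*S/(d*a^2) < 1/2 := by rw [div_lt_iff₀ hda]; linarith
  have ht1 : t < 1 := by rw [ht]; linarith
  have hkey : d*t*a^2 = d*a^2/2 + r*S := by rw [ht]; field_simp
  have t0 : (0:ℝ) < t := by linarith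
  refine ⟨ht0', ht1, ?_⟩
  have e : d*(t*a)^2 = t*(d*t*a^2) := by ring
  rw [e, hkey]
  have h4 : 2*r*S < d*a^2/2 + r*S := by linarith
  calc 2*r*(t*S) = t*(2*r*S) := by ring
  _ < t*(d*a^2/2 + r*S) := mul_lt_mul_of_pos_left h4 t0


set_option maxHeartbeats 1000000 in
lemma mem_lens_spindle {r : ℝ} (hr : 0 ≤ r) {p x n : X} {ε δ : ℝ}
    (hn : ‖n‖ ≤ 1) (hnv : ⟪n, x - p⟫_ℝ = 0) (hε0 : 0 ≤ ε) (hε1 : ε ≤ 1) (hδ : δ ≤ 0)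
    (hkey : (ε - 1/2)^2*‖x-p‖^2 + (δ - Real.sqrt (r^2 - ‖x-p‖^2/4))^2 ≤ r^2) :
    p + ε•(x-p) + δ•n ∈ lens r p x := by
  refine Set.mem_iInter₂.2 fun c hc => ?_
  obtain ⟨hc1, hc2⟩ := hc
  rw [mem_closedBall, dist_eq_norm] at hc1 hc2 ⊢
  obtain ⟨γ, hγ⟩ : ∃ γ, γ = c - p - (2⁻¹ : ℝ)•(x-p) := ⟨_, rfl⟩
  obtain ⟨α, hα⟩ : ∃ α, α = ε - 1/2 := ⟨_, rfl⟩
  set A := ‖x-p‖^2 with hA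
  set h := Real.sqrt (r^2 - A/4) with hh
  have e1 : p - c = -(γ + (2⁻¹:ℝ)•(x-p)) := by rw [hγ]; abel
  have e2 : x - c = (2⁻¹:ℝ)•(x-p) - γ := by rw [hγ]; module
  have e3 : p + ε•(x-p) + δ•n - c = α•(x-p) + δ•n - γ := by rw [hγ, hα]; module
  rw [e1, norm_neg] at hc1
  rw [e2] at hc2
  rw [e3]
  have sq1 : ‖γ + (2⁻¹:ℝ)•(x-p)‖^2 = ‖γ‖^2 + ⟪x-p,γ⟫_ℝ + A/4 := by
    simp only [hA, norm_sq_inner, inner_add_left, inner_add_right, real_inner_smul_left,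
      real_inner_smul_right, real_inner_comm γ (x-p)]
    ring
  have sq2 : ‖(2⁻¹:ℝ)•(x-p) - γ‖^2 = ‖γ‖^2 - ⟪x-p,γ⟫_ℝ + A/4 := by
    simp only [hA, norm_sq_inner, inner_sub_left, inner_sub_right, real_inner_smul_left,
      real_inner_smul_right, real_inner_comm γ (x-p)]
    ring
  have h1 : ‖γ‖^2 + ⟪x-p,γ⟫_ℝ + A/4 ≤ r^2 := by
    rw [← sq1]; nlinarith [norm_nonneg (γ + (2⁻¹:ℝ)•(x-p))]
  have h2 : ‖γ‖^2 - ⟪x-p,γ⟫_ℝ + A/4 ≤ r^2 := by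
    rw [← sq2]; nlinarith [norm_nonneg ((2⁻¹:ℝ)•(x-p) - γ)]
  have sq3 : ‖α•(x-p) + δ•n - γ‖^2
      = α^2*A + δ^2*‖n‖^2 + ‖γ‖^2 + 2*α*δ*⟪x-p,n⟫_ℝ - 2*α*⟪x-p,γ⟫_ℝ - 2*δ*⟪n,γ⟫_ℝ := by
    simp only [hA, norm_sq_inner, inner_sub_left, inner_sub_right, inner_add_left,
      inner_add_right, real_inner_smul_left, real_inner_smul_right,
      real_inner_comm γ (x-p), real_inner_comm γ n, real_inner_comm n (x-p)]
    ring
  have hvn : ⟪x-p,n⟫_ℝ = 0 := by rw [real_inner_comm]; exact hnv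
  have hG : (0:ℝ) ≤ ‖γ‖^2 := sq_nonneg _
  have hnng : (0:ℝ) ≤ r^2 - A/4 := by linarith
  have hh2 : h^2 = r^2 - A/4 := Real.sq_sqrt hnng
  have hhpos : 0 ≤ h := Real.sqrt_nonneg _
  have CS : ⟪n,γ⟫_ℝ^2 ≤ ‖n‖^2*‖γ‖^2 := by
    have := real_inner_mul_inner_self_le n γ
    nlinarith [real_inner_self_eq_norm_sq n, real_inner_self_eq_norm_sq γ]
  have hn2 : ‖n‖^2 ≤ 1 := by nlinarith [norm_nonneg n]
  have hGh : ‖γ‖^2 ≤ h^2 := by linarith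
  have hng : |⟪n,γ⟫_ℝ| ≤ h := by
    have hsq' : ⟪n,γ⟫_ℝ^2 ≤ h^2 := by nlinarith
    have := abs_le_of_sq_le_sq' hsq' hhpos
    exact abs_le.2 this
  have hαabs : |α| ≤ 1/2 := abs_le.2 ⟨by rw [hα]; linarith, by rw [hα]; linarith⟩
  have target : ‖α•(x-p) + δ•n - γ‖^2 ≤ r^2 := by
    rw [sq3, hvn]
    have b1 : - (2*δ*⟪n,γ⟫_ℝ) ≤ 2*(-δ)*h := by
      rcases abs_le.1 hng with ⟨l, u⟩
      nlinarith
    have b2 : δ^2*‖n‖^2 ≤ δ^2 := by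
      have := mul_le_mul_of_nonneg_left hn2 (sq_nonneg δ)
      linarith
    have b3 : -(2*α*⟪x-p,γ⟫_ℝ) ≤ |⟪x-p,γ⟫_ℝ| := by
      have h5 := neg_abs_le (α*⟪x-p,γ⟫_ℝ)
      have h6 := abs_mul α ⟪x-p,γ⟫_ℝ
      nlinarith [mul_le_mul_of_nonneg_right hαabs (abs_nonneg (⟪x-p,γ⟫_ℝ))]
    have b4 : ‖γ‖^2 + |⟪x-p,γ⟫_ℝ| ≤ r^2 - A/4 := by
      rcases abs_cases (⟪x-p,γ⟫_ℝ) with ⟨e, _⟩ | ⟨e, _⟩ <;> linarith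
    have hkey' : α^2*A + (δ - h)^2 ≤ r^2 := by rw [hα]; exact hkey
    have expand : (δ-h)^2 = δ^2 - 2*δ*h + h^2 := by ring
    linarith
  calc ‖α•(x-p) + δ•n - γ‖ = Real.sqrt (‖α•(x-p) + δ•n - γ‖^2) := by
        rw [Real.sqrt_sq (norm_nonneg _)]
    _ ≤ Real.sqrt (r^2) := Real.sqrt_le_sqrt target
    _ = r := Real.sqrt_sq hr

set_option maxHeartbeats 1000000 in
lemma exists_lens_closer {r : ℝ} (hr : 0 < r) {p x z : X}
    (hdz : z ≠ p) (hxp : x ≠ p) (ha2 : ‖x - p‖ < 2*r)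
    (hS0 : 0 ≤ -⟪z - p, x - p⟫_ℝ)
    (hmain : 2*r*(-⟪z - p, x - p⟫_ℝ) < ‖z - p‖*‖x - p‖^2) :
    ∃ q ∈ lens r p x, ‖z - q‖ < ‖z - p‖ := by
  have hd : 0 < ‖z - p‖ := by
    rw [norm_pos_iff]; exact sub_ne_zero.2 hdz
  have haa : 0 < ‖x - p‖ := by
    rw [norm_pos_iff]; exact sub_ne_zero.2 hxp
  obtain ⟨d, hdd⟩ : ∃ d, d = ‖z - p‖ := ⟨_, rfl⟩
  obtain ⟨a, had⟩ : ∃ a, a = ‖x - p‖ := ⟨_, rfl⟩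
  obtain ⟨s, hsd⟩ : ∃ s, s = -⟪z - p, x - p⟫_ℝ / d := ⟨_, rfl⟩
  have hd0 : 0 < d := hdd ▸ hd
  have ha0 : 0 < a := had ▸ haa
  have ha2r : a < 2*r := had ▸ ha2
  have hs0' : 0 ≤ s := by rw [hsd]; positivity
  have hI1 : ⟪z - p, x - p⟫_ℝ = -(d*s) := by rw [hsd]; field_simp
  have hI2 : ⟪z - p, z - p⟫_ℝ = d^2 := by rw [hdd, ← norm_sq_inner]
  have hI3 : ⟪x - p, x - p⟫_ℝ = a^2 := by rw [had, ← norm_sq_inner]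
  have hI1' : ⟪x - p, z - p⟫_ℝ = -(d*s) := by rw [real_inner_comm]; exact hI1
  have hsmall : 2*r*s < a^2 := by
    have hmain' := hmain
    rw [hI1, ← hdd, ← had, neg_neg] at hmain'
    exact sc1 hd0 (by linarith)
  obtain ⟨hsa, hs2a2⟩ := sc2 hr ha0 ha2r hs0' hsmall
  have hb2 : 0 < 1 - s^2/a^2 := by
    rw [sub_pos, div_lt_one (by positivity)]
    exact hs2a2
  obtain ⟨b, hbd⟩ : ∃ b, b = Real.sqrt (1 - s^2/a^2) := ⟨_, rfl⟩
  have hb0 : 0 < b := hbd ▸ Real.sqrt_pos.2 hb2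
  have hbsq : b^2 = 1 - s^2/a^2 := by rw [hbd]; exact Real.sq_sqrt hb2.le
  obtain ⟨h, hhd⟩ : ∃ h, h = Real.sqrt (r^2 - a^2/4) := ⟨_, rfl⟩
  have hh2pos : 0 < r^2 - a^2/4 := sc9 hr ha2r ha0
  have hh0 : 0 < h := hhd ▸ Real.sqrt_pos.2 hh2pos
  have hhsq : h^2 = r^2 - a^2/4 := by rw [hhd]; exact Real.sq_sqrt hh2pos.le
  -- the normal direction
  obtain ⟨w, hwd⟩ : ∃ w, w = (d⁻¹)•(z-p) + (s/a^2)•(x-p) := ⟨_, rfl⟩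
  have hwv : ⟪w, x - p⟫_ℝ = 0 := by
    rw [hwd]
    simp only [inner_add_left, real_inner_smul_left, hI1, hI3]
    field_simp
    ring
  have hwz : ⟪w, z - p⟫_ℝ = d*b^2 := by
    rw [hwd]
    simp only [inner_add_left, real_inner_smul_left, hI2, hI1', hbsq]
    field_simp
    ring
  have hww : ⟪w, w⟫_ℝ = b^2 := by
    rw [hwd]
    simp only [inner_add_left, inner_add_right, real_inner_smul_left, real_inner_smul_right,
      hI2, hI3, hI1', hI1, hbsq]
    field_simp
    ring
  obtain ⟨n, hnd⟩ : ∃ n : X, n = -(b⁻¹)•w := ⟨_, rfl⟩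
  have hnv : ⟪n, x - p⟫_ℝ = 0 := by
    rw [hnd]; simp only [real_inner_smul_left, hwv, mul_zero]
  have hzw : ⟪z - p, w⟫_ℝ = d*b^2 := by rw [real_inner_comm]; exact hwz
  have hnz : ⟪z - p, n⟫_ℝ = -(d*b) := by
    rw [hnd]
    simp only [real_inner_smul_right, hzw]
    field_simp
  have hnn : ⟪n, n⟫_ℝ = 1 := by
    rw [hnd]
    simp only [real_inner_smul_left, real_inner_smul_right, hww]
    field_simp
  have hn1 : ‖n‖ = 1 := by
    have h2 : ‖n‖^2 = 1 := by rw [norm_sq_inner, hnn]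
    exact sc8 h2 (norm_nonneg n)
  -- the function Φ
  obtain ⟨Φ, hΦd⟩ : ∃ f : ℝ → ℝ, f = fun t => t*a^2 + 2*d*s
      + a^2*(1-t)*(Real.sqrt (a^2*t*(1-t)) - 2*d*b)/(2*h + Real.sqrt (a^2*t*(1-t))) :=
    ⟨_, rfl⟩
  have hΦ0 : Φ 0 = 2*d*s - a^2*d*b/h := by
    rw [hΦd]
    simp only [mul_zero, zero_mul, mul_one, sub_zero, Real.sqrt_zero, add_zero, zero_add]
    field_simp
    ring
  have hΦ0neg : Φ 0 < 0 := by
    rw [hΦ0]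
    have := sc3 hr ha0 hs0' hd0 hh0 hb0 hsmall hhsq hbsq
    linarith
  have hcont : ContinuousAt Φ 0 := by
    rw [hΦd]
    have hden : 2*h + Real.sqrt (a^2*(0:ℝ)*(1-0)) ≠ 0 := by
      simp only [mul_zero, zero_mul, Real.sqrt_zero, add_zero]
      positivity
    have c0 : Continuous fun t : ℝ => Real.sqrt (a^2*t*(1-t)) :=
      Real.continuous_sqrt.comp ((continuous_const.mul continuous_id).mul
        (continuous_const.sub continuous_id))
    have c1 : Continuous fun t : ℝ => a^2*(1-t)*(Real.sqrt (a^2*t*(1-t)) - 2*d*b) := by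
      exact (continuous_const.mul (continuous_const.sub continuous_id)).mul
        (c0.sub continuous_const)
    have c2 : Continuous fun t : ℝ => 2*h + Real.sqrt (a^2*t*(1-t)) :=
      continuous_const.add c0
    exact ((continuous_id.mul continuous_const).add continuous_const).continuousAt.add
      (c1.continuousAt.div c2.continuousAt hden)
  have hev : ∀ᶠ t in 𝓝[>] (0:ℝ), Φ t < 0 :=
    (Filter.Tendsto.eventually_lt_const hΦ0neg hcont).filter_mono nhdsWithin_le_nhds
  have hio : Ioo (0:ℝ) (1/2) ∈ 𝓝[>] (0:ℝ) :=
    Ioo_mem_nhdsGT_of_mem ⟨le_refl 0, by norm_num⟩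
  obtain ⟨ε, hφε, hεI⟩ := (hev.and (eventually_of_mem hio fun t ht => ht)).exists
  obtain ⟨hε0, hε12⟩ := hεI
  -- the point q
  obtain ⟨C, hCd⟩ : ∃ C, C = a^2*ε*(1-ε) := ⟨_, rfl⟩
  have hC0 : 0 < C := by
    rw [hCd]
    have h1ε : (0:ℝ) < 1 - ε := by linarith
    positivity
  obtain ⟨δ, hδd⟩ : ∃ δ, δ = h - Real.sqrt (h^2 + C) := ⟨_, rfl⟩
  have hδsqrt : h - δ = Real.sqrt (h^2 + C) := by rw [hδd]; ring
  have hhC : (0:ℝ) ≤ h^2 + C := by positivity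
  have hδsq' : (h - δ)^2 = h^2 + C := by rw [hδsqrt]; exact Real.sq_sqrt hhC
  have hδneg : δ ≤ 0 := by
    rw [hδd, sub_nonpos]
    calc h = Real.sqrt (h^2) := by rw [Real.sqrt_sq hh0.le]
    _ ≤ Real.sqrt (h^2 + C) := Real.sqrt_le_sqrt (by linarith)
  have hδsq : δ^2 = C + 2*h*δ := sc6 hδsq'
  have hnegδ : -δ ≤ Real.sqrt C := by
    have h1 : Real.sqrt (h^2 + C) ≤ h + Real.sqrt C := by
      have h2 : h^2 + C ≤ (h + Real.sqrt C)^2 :=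
        sc7 hh0.le (Real.sqrt_nonneg C) (Real.sq_sqrt hC0.le)
      calc Real.sqrt (h^2 + C) ≤ Real.sqrt ((h + Real.sqrt C)^2) := Real.sqrt_le_sqrt h2
        _ = h + Real.sqrt C := Real.sqrt_sq (by positivity)
    rw [hδd]
    linarith
  obtain ⟨D, hDd⟩ : ∃ D, D = 2*h + Real.sqrt C := ⟨_, rfl⟩
  have hD0 : 0 < D := by rw [hDd]; positivity
  have hfrac : C/D ≤ -δ := sc4 hnegδ hδneg hδsq hDd hD0
  have hφval : Φ ε = ε*a^2 + 2*d*s + a^2*(1-ε)*(Real.sqrt C - 2*d*b)/D := by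
    simp only [hΦd, hCd, hDd]
  have step1 : ε^2*a^2 + δ^2 + 2*ε*(d*s) + 2*δ*(d*b) ≤ ε*Φ ε := by
    have e2 : C - 2*(C/D)*(h+d*b) = C*(Real.sqrt C - 2*d*b)/D := by
      rw [hDd]
      field_simp
      ring
    have e3 : ε*Φ ε = ε^2*a^2 + 2*d*s*ε + C*(Real.sqrt C - 2*d*b)/D := by
      rw [hφval, hCd]
      field_simp
    have e4 := sc5 (ε := ε) (a := a) (s := s) (d := d) (b := b) hδsq hfrac
      (by positivity : (0:ℝ) ≤ h + d*b)
    linarith [e2, e3, e4]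
  have hqneg : ε^2*a^2 + δ^2 + 2*ε*(d*s) + 2*δ*(d*b) < 0 :=
    lt_of_le_of_lt step1 (mul_neg_of_pos_of_neg hε0 hφε)
  -- the point q and conclusion
  refine ⟨p + ε•(x-p) + δ•n, ?_, ?_⟩
  · apply mem_lens_spindle hr.le (le_of_eq hn1) hnv hε0.le (by linarith) hδneg
    rw [← had, ← hhd]
    have e5 : (ε - 1/2)^2*a^2 = a^2/4 - C := by rw [hCd]; ring
    have e6 : (δ - h)^2 = h^2 + C := by
      rw [← hδsq']; ring
    rw [e5, e6]
    linarith [hhsq]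
  · have hvn' : ⟪x - p, n⟫_ℝ = 0 := by rw [real_inner_comm]; exact hnv
    have expand : ‖z - (p + ε•(x-p) + δ•n)‖^2
        = d^2 + ε^2*a^2 + δ^2 + 2*ε*(d*s) + 2*δ*(d*b) := by
      have e0 : z - (p + ε•(x-p) + δ•n) = (z - p) - ε•(x-p) - δ•n := by abel
      rw [e0, norm_expand, hI1, hI2, hI3, hnz, hnn, hvn']
      ring
    have hlt : ‖z - (p + ε•(x-p) + δ•n)‖^2 < d^2 := by
      rw [expand]; linarith [hqneg]
    rw [hdd] at hlt
    exact lt_of_pow_lt_pow_left₀ 2 (norm_nonneg _) hlt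

lemma IsRConvex.convex {r : ℝ} {Ω : Set X} (h : IsRConvex r Ω) : Convex ℝ Ω := by
  intro x hx y hy t1 t2 ht1 ht2 hsum
  apply h x hx y hy
  exact Set.mem_iInter₂.2 fun c hc => (convex_closedBall c r) hc.1 hc.2 ht1 ht2 hsum


end Auxiliary

/-- A closed set `Ω` is `r`-convex if and only if it is an intersection of closed balls
of radius `r`. -/
theorem isRConvex_iff_iInter_closedBall (hdim : 2 ≤ Module.rank ℝ X) {r : ℝ} (hr : 0 < r)
    {Ω : Set X} (hcl : IsClosed Ω) :
    IsRConvex r Ω ↔ ∃ M : Set X, Ω = ⋂ c ∈ M, closedBall c r := by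
  constructor
  · intro hconv
    by_cases hU : Ω = univ
    · exact ⟨∅, by simp [hU]⟩
    by_cases hE : Ω = ∅
    · have hnt : Nontrivial X :=
        rank_pos_iff_nontrivial.mp (lt_of_lt_of_le (by norm_num) hdim)
      obtain ⟨v, hv⟩ := exists_ne (0 : X)
      have hvn : (0:ℝ) < ‖v‖ := norm_pos_iff.2 hv
      refine ⟨{0, (3*r/‖v‖)•v}, ?_⟩
      have hcn : ‖(3*r/‖v‖)•v‖ = 3*r := by
        rw [norm_smul, Real.norm_eq_abs, abs_of_pos (by positivity)]
        field_simp
      rw [hE]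
      symm
      rw [eq_empty_iff_forall_notMem]
      intro y hy
      simp only [mem_iInter, mem_insert_iff, mem_singleton_iff] at hy
      have h1 := hy 0 (Or.inl rfl)
      have h2 := hy ((3*r/‖v‖)•v) (Or.inr rfl)
      rw [mem_closedBall, dist_zero_right] at h1
      rw [mem_closedBall, dist_eq_norm] at h2
      have : 3*r ≤ 2*r := by
        calc 3*r = ‖(3*r/‖v‖)•v‖ := hcn.symm
        _ ≤ ‖y‖ + ‖y - (3*r/‖v‖)•v‖ := by
            rw [← norm_neg (y - _)]
            calc ‖(3*r/‖v‖)•v‖ = ‖y + -(y - (3*r/‖v‖)•v)‖ := by congr 1; abel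
            _ ≤ ‖y‖ + ‖-(y - (3*r/‖v‖)•v)‖ := norm_add_le _ _
        _ ≤ r + r := add_le_add h1 h2
        _ = 2*r := by ring
      linarith
    -- main case
    have hne : Ω.Nonempty := nonempty_iff_ne_empty.2 hE
    have hdiam : ∀ x ∈ Ω, ∀ y ∈ Ω, ‖x - y‖ ≤ 2*r := by
      intro x hx y hy
      by_contra hfar
      push_neg at hfar
      apply hU
      rw [eq_univ_iff_forall]
      intro q
      apply hconv x hx y hy
      have hempty : {c : X | x ∈ closedBall c r ∧ y ∈ closedBall c r} = ∅ := by
        rw [eq_empty_iff_forall_notMem]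
        rintro c ⟨hc1, hc2⟩
        rw [mem_closedBall, dist_eq_norm] at hc1 hc2
        have : ‖x - y‖ ≤ 2*r := by
          calc ‖x - y‖ = ‖(x - c) + -(y - c)‖ := by congr 1; abel
          _ ≤ ‖x - c‖ + ‖-(y - c)‖ := norm_add_le _ _
          _ ≤ r + r := by rw [norm_neg]; exact add_le_add hc1 hc2
          _ = 2*r := by ring
        linarith
      unfold lens
      rw [hempty]
      simp
    have hcvx : Convex ℝ Ω := hconv.convex
    refine ⟨{c | Ω ⊆ closedBall c r}, ?_⟩
    ext z
    constructor
    · intro hz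
      exact mem_iInter₂.2 fun c hc => hc hz
    · intro hz
      by_contra hzΩ
      obtain ⟨p, hpΩ, hproj⟩ :=
        exists_norm_eq_iInf_of_complete_convex hne hcl.isComplete hcvx z
      have hpineq : ∀ w ∈ Ω, ⟪z - p, w - p⟫_ℝ ≤ 0 :=
        (norm_eq_iInf_iff_real_inner_le_zero hcvx hpΩ).1 hproj
      have hzp : z ≠ p := fun hh => hzΩ (hh ▸ hpΩ)
      have hd0 : 0 < ‖z - p‖ := norm_pos_iff.2 (sub_ne_zero.2 hzp)
      obtain ⟨c₀, hc₀⟩ : ∃ c₀ : X, c₀ = p - (r/‖z - p‖)•(z - p) := ⟨_, rfl⟩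
      -- z is not in the ball around c₀
      have hznot : ¬ z ∈ closedBall c₀ r := by
        rw [mem_closedBall, dist_eq_norm, hc₀]
        have e1 : z - (p - (r/‖z - p‖)•(z - p)) = (1 + r/‖z - p‖)•(z - p) := by
          rw [add_smul, one_smul]; abel
        rw [e1, norm_smul, Real.norm_eq_abs, abs_of_pos (by positivity)]
        have : (1 + r/‖z - p‖)*‖z - p‖ = ‖z - p‖ + r := by field_simp
        rw [this]
        push_neg
        linarith
      -- Ω is contained in the ball around c₀
      have hsub : Ω ⊆ closedBall c₀ r := by
        intro x hxΩ
        by_contra hfar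
        rw [mem_closedBall, dist_eq_norm] at hfar
        push_neg at hfar
        have hxp : x ≠ p := by
          intro hh
          rw [hh, hc₀] at hfar
          have : p - (p - (r/‖z - p‖)•(z - p)) = (r/‖z - p‖)•(z - p) := by abel
          rw [this, norm_smul, Real.norm_eq_abs, abs_of_pos (by positivity)] at hfar
          have : r/‖z - p‖*‖z - p‖ = r := by field_simp
          linarith [this ▸ hfar]
        have ha0 : 0 < ‖x - p‖ := norm_pos_iff.2 (sub_ne_zero.2 hxp)
        have hS0 : 0 ≤ -⟪z - p, x - p⟫_ℝ := by
          have := hpineq x hxΩ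
          linarith
        -- the main scalar inequality from hfar
        have hmainx : 2*r*(-⟪z - p, x - p⟫_ℝ) < ‖z - p‖*‖x - p‖^2 := by
          have e2 : x - c₀ = (x - p) + (r/‖z - p‖)•(z - p) := by rw [hc₀]; abel
          have e3 : ‖x - c₀‖^2 = ‖x - p‖^2 + 2*(r/‖z - p‖)*⟪z - p, x - p⟫_ℝ
              + (r/‖z - p‖)^2*‖z - p‖^2 := by
            rw [e2, norm_expand2, ← norm_sq_inner, ← norm_sq_inner]
          have e4 : (r/‖z - p‖)^2*‖z - p‖^2 = r^2 := by field_simp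
          have e5 : r^2 < ‖x - c₀‖^2 := by
            have h1 : 0 ≤ ‖x - c₀‖ := norm_nonneg _
            nlinarith [hfar]
          rw [e3, e4] at e5
          have e6 : 0 < ‖x - p‖^2 + 2*(r/‖z - p‖)*⟪z - p, x - p⟫_ℝ := by linarith
          have e7 := mul_pos hd0 e6
          rw [mul_add] at e7
          have e8 : ‖z - p‖*(2*(r/‖z - p‖)*⟪z - p, x - p⟫_ℝ)
              = 2*r*⟪z - p, x - p⟫_ℝ := by field_simp
          rw [e8] at e7
          linarith
        -- shrink x towards p to get strict inequality on the diameter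
        obtain ⟨t, htd⟩ : ∃ t : ℝ,
            t = 1/2 + r*(-⟪z - p, x - p⟫_ℝ)/(‖z - p‖*‖x - p‖^2) := ⟨_, rfl⟩
        obtain ⟨ht12, ht1, htm⟩ := sc10 hr hd0 ha0 hS0 hmainx htd
        have ht0 : (0:ℝ) < t := by linarith
        obtain ⟨x', hx'd⟩ : ∃ x' : X, x' = p + t•(x - p) := ⟨_, rfl⟩
        have hx'Ω : x' ∈ Ω := by
          have e : x' = (1 - t)•p + t•x := by rw [hx'd]; module
          rw [e]
          exact hcvx hpΩ hxΩ (by linarith) ht0.le (by ring)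
        have hx'p : x' - p = t•(x - p) := by rw [hx'd]; abel
        have hx'norm : ‖x' - p‖ = t*‖x - p‖ := by
          rw [hx'p, norm_smul, Real.norm_eq_abs, abs_of_pos ht0]
        have hx'ne : x' ≠ p := by
          have hpos : 0 < ‖x' - p‖ := by rw [hx'norm]; positivity
          exact fun hh => by rw [hh, sub_self, norm_zero] at hpos; exact lt_irrefl 0 hpos
        have hI' : ⟪z - p, x' - p⟫_ℝ = t*⟪z - p, x - p⟫_ℝ := by
          rw [hx'p, real_inner_smul_right]
        have hS0' : 0 ≤ -⟪z - p, x' - p⟫_ℝ := by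
          rw [hI']
          have := mul_nonneg ht0.le hS0
          linarith
        have ha2' : ‖x' - p‖ < 2*r := by
          rw [hx'norm]
          have hle : ‖x - p‖ ≤ 2*r := by
            have := hdiam x hxΩ p hpΩ
            linarith
          calc t*‖x - p‖ < 1*‖x - p‖ := mul_lt_mul_of_pos_right ht1 ha0
          _ = ‖x - p‖ := one_mul _
          _ ≤ 2*r := hle
        have hmain' : 2*r*(-⟪z - p, x' - p⟫_ℝ) < ‖z - p‖*‖x' - p‖^2 := by
          rw [hI', hx'norm]
          have e : -(t*⟪z - p, x - p⟫_ℝ) = t*(-⟪z - p, x - p⟫_ℝ) := by ring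
          rw [e]
          exact htm
        obtain ⟨q, hqlens, hqlt⟩ := exists_lens_closer hr hzp hx'ne ha2' hS0' hmain'
        have hqΩ : q ∈ Ω := hconv p hpΩ x' hx'Ω hqlens
        have hcontr : ‖z - p‖ ≤ ‖z - q‖ := by
          have h1 := hpineq q hqΩ
          have e9 : ‖z - q‖^2 = ‖z - p‖^2 - 2*⟪z - p, q - p⟫_ℝ + ‖q - p‖^2 := by
            have e10 : z - q = (z - p) - (q - p) := by abel
            rw [e10, norm_sub_sq_real]
          have h2 : ‖z - p‖^2 ≤ ‖z - q‖^2 := by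
            rw [e9]
            have := sq_nonneg ‖q - p‖
            linarith
          exact le_of_pow_le_pow_left₀ two_ne_zero (norm_nonneg _) h2
        exact absurd hqlt (not_lt.2 hcontr)
      exact hznot (mem_iInter₂.1 hz c₀ hsub)
  · rintro ⟨M, hM⟩ x hx y hy q hq
    rw [hM] at hx hy ⊢
    refine mem_iInter₂.2 fun c hc => ?_
    have hx' := mem_iInter₂.1 hx c hc
    have hy' := mem_iInter₂.1 hy c hc
    exact mem_iInter₂.1 hq c ⟨hx', hy'⟩
end

section
/- If (r_i) is a sequence of positive reals converging to r > 0 and Ω is a closed subset of a real Hilbert space which is r_i-convex for every i, then Ω is r-convex. -/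
/-!
Lenses shrink as the radius grows, which settles the case `rᵢ ≤ r` for some `i`; and if
`dist x y > 2r`, no ball of radius `rᵢ` close to `r` contains `x` and `y`, so the lens is the whole
space. Otherwise, for `t > r` and `ε = √(t² - r²)`, the homothety about the midpoint `m` of `x`, `y`
with ratio `(t - ε) / r` maps the `r`-lens into the `t`-lens: moving the center of a `t`-ball through
`x`, `y` toward `m` yields an `r`-ball through them (parallelogram law), and the triangle inequality
transfers the bound on `z`. As `t = rᵢ → r` the ratio tends to `1`, so `z` is a limit of points of
the closed set `Ω`.
-/

open Metric Set Filter
open scoped InnerProductSpace ENNReal Topology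

variable {X : Type*} [NormedAddCommGroup X] [InnerProductSpace ℝ X] [CompleteSpace X]

section

omit [CompleteSpace X]

section Metric

omit [InnerProductSpace ℝ X]

theorem mem_lens_iff {r : ℝ} {x y z : X} :
    z ∈ lens r x y ↔ ∀ c, dist x c ≤ r → dist y c ≤ r → dist z c ≤ r := by
  simp [lens, mem_closedBall]

theorem lens_eq_univ_of_lt_dist {r : ℝ} {x y : X} (h : 2 * r < dist x y) : lens r x y = univ :=
  eq_univ_of_forall fun _ ↦ mem_lens_iff.2 fun c hx hy ↦
    absurd (dist_triangle_right x y c) (by linarith)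

end Metric

/- A ball of radius `s` through `x` and `y` sits inside the ball of radius `t ≥ s` whose center is
pushed away from `z` by `t - s`, and that ball contains `z` only if the first one does. -/
theorem antitone_lens (x y : X) : Antitone fun r : ℝ ↦ lens r x y := by
  intro s t hst z hz
  rw [mem_lens_iff] at hz ⊢
  intro c hx hy
  rcases eq_or_ne z c with rfl | hzc
  · simpa using dist_nonneg.trans hx
  set k := (t - s) / dist z c
  have hk : 0 ≤ k := div_nonneg (sub_nonneg.2 hst) dist_nonneg
  have hball : closedBall c s ⊆ closedBall (c - k • (z - c)) t := by
    refine closedBall_subset_closedBall' ?_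
    rw [dist_eq_norm, sub_sub_cancel, norm_smul, Real.norm_of_nonneg hk, ← dist_eq_norm,
      div_mul_cancel₀ _ (dist_ne_zero.2 hzc)]
    linarith
  have hfar : dist z (c - k • (z - c)) = dist z c + (t - s) := by
    rw [dist_eq_norm, sub_sub_eq_add_sub, add_sub_right_comm,
      (SameRay.sameRay_nonneg_smul_right (z - c) hk).norm_add, norm_smul, Real.norm_of_nonneg hk,
      ← dist_eq_norm, div_mul_cancel₀ _ (dist_ne_zero.2 hzc)]
  have := hz _ (hball hx) (hball hy)
  linarith

theorem norm_sub_smul_sq_le {d v : X} {t κ : ℝ} (hsub : ‖d - v‖ ≤ t) (hadd : ‖d + v‖ ≤ t)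
    (hκ₀ : 0 ≤ κ) (hκ₁ : κ ≤ 1) : ‖d - κ • v‖ ^ 2 ≤ t ^ 2 - (1 - κ ^ 2) * ‖v‖ ^ 2 := by
  have h₁ := pow_le_pow_left₀ (norm_nonneg _) hsub 2
  have h₂ := pow_le_pow_left₀ (norm_nonneg _) hadd 2
  rw [norm_sub_sq_real] at h₁ ⊢
  rw [norm_add_sq_real] at h₂
  rw [real_inner_smul_right, norm_smul, Real.norm_of_nonneg hκ₀, mul_pow]
  nlinarith [mul_le_mul_of_nonneg_left h₁ (by linarith : 0 ≤ 1 + κ),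
    mul_le_mul_of_nonneg_left h₂ (by linarith : 0 ≤ 1 - κ)]

theorem dist_sq_midpoint_add_smul_le {x y c : X} {t κ : ℝ} (hx : dist x c ≤ t) (hy : dist y c ≤ t)
    (hκ₀ : 0 ≤ κ) (hκ₁ : κ ≤ 1) :
    dist x (midpoint ℝ x y + κ • (c - midpoint ℝ x y)) ^ 2 ≤
      t ^ 2 - (1 - κ ^ 2) * dist (midpoint ℝ x y) c ^ 2 := by
  set m := midpoint ℝ x y
  have hym : y - m = -(x - m) := by
    rw [right_sub_midpoint, left_sub_midpoint, ← smul_neg, neg_sub]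
  rw [dist_comm m, dist_eq_norm, dist_eq_norm,
    show x - (m + κ • (c - m)) = (x - m) - κ • (c - m) by abel]
  refine norm_sub_smul_sq_le ?_ ?_ hκ₀ hκ₁
  · rwa [sub_sub_sub_cancel_right, ← dist_eq_norm]
  · rwa [← norm_neg, neg_add', ← hym, sub_sub_sub_cancel_right, ← dist_eq_norm]

/- If `c` is far from `m`, moving it to `m + κ • (c - m)` with `κ * ‖c - m‖ = √(‖c - m‖² - ε²)`
trades `ε²` of squared radius for distance to `m`; if it is near, `m` itself will do. -/
theorem exists_shrunk_center {x y c : X} {r t ε : ℝ} (hr : 0 < r) (hε : 0 ≤ ε)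
    (hrεt : r ^ 2 + ε ^ 2 = t ^ 2) (hxy : dist x y ≤ 2 * r) (hx : dist x c ≤ t)
    (hy : dist y c ≤ t) :
    ∃ κ, 0 ≤ κ ∧ κ ≤ 1 ∧
      dist x (midpoint ℝ x y + κ • (c - midpoint ℝ x y)) ≤ r ∧
      dist y (midpoint ℝ x y + κ • (c - midpoint ℝ x y)) ≤ r ∧
      r * (dist (midpoint ℝ x y) c - ε) ≤ (t - ε) * (κ * dist (midpoint ℝ x y) c) := by
  set m := midpoint ℝ x y
  set b := dist m c
  rcases le_or_gt b ε with hbε | hεb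
  · refine ⟨0, le_rfl, zero_le_one, ?_, ?_, ?_⟩
    · simp only [zero_smul, add_zero, m, dist_left_midpoint, Real.norm_ofNat]
      linarith
    · simp only [zero_smul, add_zero, m, dist_right_midpoint, Real.norm_ofNat]
      linarith
    · nlinarith
  set s := √(b ^ 2 - ε ^ 2)
  have hb : 0 < b := hε.trans_lt hεb
  have hs : s ^ 2 = b ^ 2 - ε ^ 2 := Real.sq_sqrt (by nlinarith)
  have hsb : s ≤ b := (Real.sqrt_le_left hb.le).2 (by nlinarith)
  have hbt : b ≤ t := mem_closedBall.1 ((convex_closedBall c t).midpoint_mem hx hy)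
  have hκb : s / b * b = s := div_mul_cancel₀ _ hb.ne'
  have hshrunk : t ^ 2 - (1 - (s / b) ^ 2) * b ^ 2 = r ^ 2 := by
    rw [sub_mul, one_mul, div_pow, div_mul_cancel₀ _ (by positivity), hs]; linarith
  have hεt : ε ≤ t := by nlinarith
  have hkey : (r * (b - ε)) ^ 2 ≤ ((t - ε) * s) ^ 2 := by
    have : ((t - ε) * s) ^ 2 - (r * (b - ε)) ^ 2 = 2 * ε * (t - ε) * (t - b) * (b - ε) := by
      linear_combination (t - ε) ^ 2 * hs - (b - ε) ^ 2 * hrεt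
    nlinarith [mul_nonneg (mul_nonneg (mul_nonneg hε (sub_nonneg.2 hεt)) (sub_nonneg.2 hbt))
      (sub_nonneg.2 hεb.le)]
  have hκ₀ : 0 ≤ s / b := by positivity
  have hκ₁ : s / b ≤ 1 := (div_le_one hb).2 hsb
  have hxκ := dist_sq_midpoint_add_smul_le hx hy hκ₀ hκ₁
  have hyκ := dist_sq_midpoint_add_smul_le hy hx hκ₀ hκ₁
  rw [hshrunk] at hxκ
  rw [midpoint_comm y x, hshrunk] at hyκ
  refine ⟨s / b, hκ₀, hκ₁, ?_, ?_, ?_⟩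
  · exact (pow_le_pow_iff_left₀ dist_nonneg hr.le two_ne_zero).1 hxκ
  · exact (pow_le_pow_iff_left₀ dist_nonneg hr.le two_ne_zero).1 hyκ
  · rw [hκb]
    exact (pow_le_pow_iff_left₀ (by nlinarith) (mul_nonneg (sub_nonneg.2 hεt) (Real.sqrt_nonneg _))
      two_ne_zero).1 hkey

theorem dist_add_smul_sub_le (m z c : X) {l κ : ℝ} (hl : 0 ≤ l) (hlκ : l * κ ≤ 1) :
    dist (m + l • (z - m)) c ≤ l * dist z (m + κ • (c - m)) + (1 - l * κ) * dist m c := by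
  have hsplit : m + l • (z - m) - c = l • (z - (m + κ • (c - m))) + (1 - l * κ) • (m - c) := by
    module
  rw [dist_eq_norm, dist_eq_norm, dist_eq_norm, hsplit]
  refine (norm_add_le _ _).trans_eq ?_
  rw [norm_smul, norm_smul, Real.norm_of_nonneg hl, Real.norm_of_nonneg (sub_nonneg.2 hlκ)]

theorem midpoint_add_smul_mem_lens {x y z : X} {r t ε : ℝ} (hr : 0 < r) (hε : 0 ≤ ε)
    (hrεt : r ^ 2 + ε ^ 2 = t ^ 2) (hxy : dist x y ≤ 2 * r) (hz : z ∈ lens r x y) :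
    midpoint ℝ x y + ((t - ε) / r) • (z - midpoint ℝ x y) ∈ lens t x y := by
  set m := midpoint ℝ x y
  rw [mem_lens_iff] at hz ⊢
  intro c hx hy
  obtain ⟨κ, hκ₀, hκ₁, hxκ, hyκ, hgain⟩ := exists_shrunk_center hr hε hrεt hxy hx hy
  have ht : 0 ≤ t := dist_nonneg.trans hx
  have hl₀ : 0 ≤ (t - ε) / r := div_nonneg (by nlinarith) hr.le
  have hl₁ : (t - ε) / r ≤ 1 := (div_le_one hr).2 (by nlinarith)
  have hlr : (t - ε) / r * r = t - ε := div_mul_cancel₀ _ hr.ne'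
  have hgain' : dist m c - ε ≤ (t - ε) / r * (κ * dist m c) := by
    rwa [div_mul_eq_mul_div, le_div_iff₀ hr, mul_comm]
  calc dist (m + ((t - ε) / r) • (z - m)) c
      ≤ (t - ε) / r * dist z (m + κ • (c - m)) + (1 - (t - ε) / r * κ) * dist m c :=
        dist_add_smul_sub_le m z c hl₀ (mul_le_one₀ hl₁ hκ₀ hκ₁)
    _ ≤ (t - ε) / r * r + (1 - (t - ε) / r * κ) * dist m c := by
        gcongr
        exact hz _ hxκ hyκ
    _ ≤ t := by linarith

end

theorem isRConvex_of_seq_general {r : ℝ} (hr : 0 < r)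
    {ri : ℕ → ℝ} (hlim : Tendsto ri atTop (𝓝 r))
    {Ω : Set X} (hcl : IsClosed Ω) (h : ∀ i, IsRConvex (ri i) Ω) : IsRConvex r Ω := by
  intro x hx y hy z hz
  by_cases hle : ∃ i, ri i ≤ r
  · obtain ⟨i, hi⟩ := hle
    exact h i x hx y hy (antitone_lens x y hi hz)
  push Not at hle
  rcases le_or_gt (dist x y) (2 * r) with hxy | hxy
  · set f : ℝ → X := fun t ↦
      midpoint ℝ x y + ((t - √(t ^ 2 - r ^ 2)) / r) • (z - midpoint ℝ x y)
    have hfz : Tendsto (f ∘ ri) atTop (𝓝 z) := by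
      simpa [f, hr.ne'] using ((by fun_prop : Continuous f).tendsto r).comp hlim
    refine hcl.mem_of_tendsto hfz (Eventually.of_forall fun i ↦ h i x hx y hy ?_)
    have hpyth : r ^ 2 + √(ri i ^ 2 - r ^ 2) ^ 2 = ri i ^ 2 := by
      rw [Real.sq_sqrt (by nlinarith [hle i])]; ring
    exact midpoint_add_smul_mem_lens hr (Real.sqrt_nonneg _) hpyth hxy hz
  · obtain ⟨i, hi⟩ := (hlim.eventually_lt_const (by linarith : r < dist x y / 2)).exists
    exact h i x hx y hy (by rw [lens_eq_univ_of_lt_dist (by linarith)]; trivial)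

/-- If a closed set `Ω` is `rᵢ`-convex for a sequence of positive reals `rᵢ → r > 0`,
then `Ω` is `r`-convex. -/
theorem isRConvex_of_seq (hdim : 2 ≤ Module.rank ℝ X) {r : ℝ} (hr : 0 < r)
    {ri : ℕ → ℝ} (hri : ∀ i, 0 < ri i) (hlim : Tendsto ri atTop (𝓝 r))
    {Ω : Set X} (hcl : IsClosed Ω) (h : ∀ i, IsRConvex (ri i) Ω) : IsRConvex r Ω :=
  isRConvex_of_seq_general hr hlim hcl h
end
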